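/- arXiv:0810.3021 — 11 statements merged into one kernel-verified Lean document; each statement's English description precedes it below -/
import Mathlib

section
/- Let f : X → Y be a continuous surjection between Hausdorff topological spaces. Then the following conditions are equivalent: (1) f is subproper; (2) f has a section s : Y → X that preserves precompact sets; (3) there is a function s assigning to every compact set K ⊆ Y a compact set s(K) ⊆ X with f(s(K)) = K, which is monotone, i.e. s(K) ⊆ s(K') whenever K ⊆ K'; (4) there is a function s assigning to every compact set K ⊆ Y a compact set s(K) ⊆ X with f(s(K)) = K, which is additive, i.e. s(K ∪ K') = s(K) ∪ s(K') for all compact K, K' ⊆ Y. -/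
/-!
A section `s` preserving precompact sets gives the monotone compact-valued section
`K ↦ closure (s '' K) ∩ f ⁻¹' K`. Conversely, a monotone compact-valued section `s` is
determined up to closure by its values on points: `⋃ y ∈ K, s {y}` lies in the compact set
`s K` and maps onto `K`, so its closure is an additive compact-valued section, and
`Z = ⋃ y, s {y}` witnesses subproperness since `Z ∩ f ⁻¹' K ⊆ s K`.
-/

open Set

universe u v

namespace CompactSection

variable {X : Type u} {Y : Type v} [TopologicalSpace Y] {s : Set Y → Set X}

theorem monotone_of_additive
    (hadd : ∀ K K' : Set Y, IsCompact K → IsCompact K' → s (K ∪ K') = s K ∪ s K')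
    {K K' : Set Y} (hK : IsCompact K) (hK' : IsCompact K') (hKK' : K ⊆ K') : s K ⊆ s K' := by
  rw [← union_eq_self_of_subset_left hKK', hadd K K' hK hK']
  exact subset_union_left

theorem biUnion_singleton_subset
    (hmono : ∀ K K' : Set Y, IsCompact K → IsCompact K' → K ⊆ K' → s K ⊆ s K')
    {K : Set Y} (hK : IsCompact K) : ⋃ y ∈ K, s {y} ⊆ s K :=
  iUnion₂_subset fun _ hy ↦
    hmono _ K isCompact_singleton hK (singleton_subset_iff.2 hy)

variable [TopologicalSpace X] {f : X → Y}

theorem apply_eq_of_mem_singleton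
    (hs : ∀ K : Set Y, IsCompact K → IsCompact (s K) ∧ f '' s K = K)
    {x : X} {y : Y} (hx : x ∈ s {y}) : f x = y := by
  simpa [(hs {y} isCompact_singleton).2] using mem_image_of_mem f hx

theorem nonempty_singleton (hs : ∀ K : Set Y, IsCompact K → IsCompact (s K) ∧ f '' s K = K)
    (y : Y) : (s {y}).Nonempty :=
  Nonempty.of_image ((hs {y} isCompact_singleton).2 ▸ singleton_nonempty y)

theorem image_biUnion_singleton
    (hs : ∀ K : Set Y, IsCompact K → IsCompact (s K) ∧ f '' s K = K)
    (K : Set Y) : f '' ⋃ y ∈ K, s {y} = K := by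
  simp only [image_iUnion₂]
  refine Subset.antisymm (iUnion₂_subset fun y hy ↦ ?_) fun y hy ↦ ?_
  · rw [(hs {y} isCompact_singleton).2]
    exact singleton_subset_iff.2 hy
  · obtain ⟨x, hx⟩ := nonempty_singleton hs y
    exact mem_biUnion hy ⟨x, hx, apply_eq_of_mem_singleton hs hx⟩

theorem exists_section_of_subproper {Z : Set X} (hZ : f '' Z = univ)
    (hZK : ∀ K : Set Y, IsCompact K → IsCompact (closure (Z ∩ f ⁻¹' K))) :
    ∃ s : Y → X, (∀ y, f (s y) = y) ∧
      ∀ K : Set Y, IsCompact K → IsCompact (closure (s '' K)) := by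
  have hZf : ∀ y, ∃ x ∈ Z, f x = y := fun y ↦ hZ.symm.subset (mem_univ y)
  choose s hsZ hsf using hZf
  refine ⟨s, hsf, fun K hK ↦ (hZK K hK).of_isClosed_subset isClosed_closure
    (closure_mono ?_)⟩
  rintro _ ⟨y, hy, rfl⟩
  exact ⟨hsZ y, by rwa [mem_preimage, hsf]⟩

theorem exists_monotone_of_section [T2Space Y] (hf : Continuous f) {s : Y → X}
    (hsf : ∀ y, f (s y) = y) (hsK : ∀ K : Set Y, IsCompact K → IsCompact (closure (s '' K))) :
    ∃ t : Set Y → Set X,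
      (∀ K : Set Y, IsCompact K → IsCompact (t K) ∧ f '' t K = K) ∧
      (∀ K K' : Set Y, IsCompact K → IsCompact K' → K ⊆ K' → t K ⊆ t K') := by
  refine ⟨fun K ↦ closure (s '' K) ∩ f ⁻¹' K, fun K hK ↦ ⟨?_, ?_⟩,
    fun K K' _ _ hKK' ↦ inter_subset_inter (closure_mono (image_mono hKK')) (preimage_mono hKK')⟩
  · exact (hsK K hK).of_isClosed_subset
      (isClosed_closure.inter (hK.isClosed.preimage hf)) inter_subset_left
  · refine Subset.antisymm (image_preimage_subset f K |>.trans' (image_mono inter_subset_right))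
      fun y hy ↦ ⟨s y, ⟨subset_closure (mem_image_of_mem s hy), ?_⟩, hsf y⟩
    rwa [mem_preimage, hsf]

theorem exists_additive_of_monotone [T2Space X]
    (hs : ∀ K : Set Y, IsCompact K → IsCompact (s K) ∧ f '' s K = K)
    (hmono : ∀ K K' : Set Y, IsCompact K → IsCompact K' → K ⊆ K' → s K ⊆ s K') :
    ∃ t : Set Y → Set X,
      (∀ K : Set Y, IsCompact K → IsCompact (t K) ∧ f '' t K = K) ∧
      (∀ K K' : Set Y, IsCompact K → IsCompact K' → t (K ∪ K') = t K ∪ t K') := by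
  refine ⟨fun K ↦ closure (⋃ y ∈ K, s {y}), fun K hK ↦ ?_,
    fun K K' _ _ ↦ by simp only [biUnion_union, closure_union]⟩
  have hsub : closure (⋃ y ∈ K, s {y}) ⊆ s K :=
    (hs K hK).1.isClosed.closure_subset_iff.2 (biUnion_singleton_subset hmono hK)
  refine ⟨(hs K hK).1.of_isClosed_subset isClosed_closure hsub, Subset.antisymm ?_ ?_⟩
  · exact (image_mono hsub).trans (hs K hK).2.subset
  · exact (image_biUnion_singleton hs K).symm.subset.trans (image_mono subset_closure)

theorem subproper_of_monotone [T2Space X]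
    (hs : ∀ K : Set Y, IsCompact K → IsCompact (s K) ∧ f '' s K = K)
    (hmono : ∀ K K' : Set Y, IsCompact K → IsCompact K' → K ⊆ K' → s K ⊆ s K') :
    ∃ Z : Set X, f '' Z = univ ∧
      ∀ K : Set Y, IsCompact K → IsCompact (closure (Z ∩ f ⁻¹' K)) := by
  refine ⟨⋃ y ∈ univ, s {y}, image_biUnion_singleton hs univ, fun K hK ↦ ?_⟩
  have hsub : (⋃ y ∈ univ, s {y}) ∩ f ⁻¹' K ⊆ s K := by
    rintro x ⟨hx, hxK⟩
    obtain ⟨y, -, hxy⟩ := mem_iUnion₂.1 hx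
    rw [mem_preimage, apply_eq_of_mem_singleton hs hxy] at hxK
    exact biUnion_singleton_subset hmono hK (mem_biUnion hxK hxy)
  exact (hs K hK).1.of_isClosed_subset isClosed_closure
    ((hs K hK).1.isClosed.closure_subset_iff.2 hsub)

end CompactSection

open CompactSection in
theorem stmt_0_general {X : Type u} {Y : Type v} [TopologicalSpace X] [TopologicalSpace Y]
    [T2Space X] [T2Space Y] (f : X → Y) (hf : Continuous f) :
    List.TFAE
      [ -- (1) f is subproper
        ∃ Z : Set X, f '' Z = univ ∧
          ∀ K : Set Y, IsCompact K → IsCompact (closure (Z ∩ f ⁻¹' K)),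
        -- (2) f has a section preserving precompact sets
        ∃ s : Y → X, (∀ y, f (s y) = y) ∧
          ∀ K : Set Y, IsCompact K → IsCompact (closure (s '' K)),
        -- (3) monotone compact-valued section of 𝒦(f)
        ∃ s : Set Y → Set X,
          (∀ K : Set Y, IsCompact K → IsCompact (s K) ∧ f '' s K = K) ∧
          (∀ K K' : Set Y, IsCompact K → IsCompact K' → K ⊆ K' → s K ⊆ s K'),
        -- (4) additive compact-valued section of 𝒦(f)
        ∃ s : Set Y → Set X,
          (∀ K : Set Y, IsCompact K → IsCompact (s K) ∧ f '' s K = K) ∧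
          (∀ K K' : Set Y, IsCompact K → IsCompact K' →
            s (K ∪ K') = s K ∪ s K') ] := by
  tfae_have 1 → 2 := fun ⟨_, hZ, hZK⟩ ↦ exists_section_of_subproper hZ hZK
  tfae_have 2 → 3 := fun ⟨_, hsf, hsK⟩ ↦ exists_monotone_of_section hf hsf hsK
  tfae_have 3 → 4 := fun ⟨_, hs, hmono⟩ ↦ exists_additive_of_monotone hs hmono
  tfae_have 4 → 3 := fun ⟨s, hs, hadd⟩ ↦
    ⟨s, hs, fun _ _ hK hK' ↦ monotone_of_additive hadd hK hK'⟩
  tfae_have 3 → 1 := fun ⟨_, hs, hmono⟩ ↦ subproper_of_monotone hs hmono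
  tfae_finish

/-- For a continuous surjection `f : X → Y` between Hausdorff spaces,
the following are equivalent: (1) `f` is subproper; (2) `f` has a section preserving
precompact sets; (3) there is a monotone assignment of compact preimage-sets;
(4) there is an additive assignment of compact preimage-sets. -/
theorem stmt_0 {X : Type u} {Y : Type v} [TopologicalSpace X] [TopologicalSpace Y]
    [T2Space X] [T2Space Y] (f : X → Y) (hf : Continuous f)
    (hsurj : Function.Surjective f) :
    List.TFAE
      [ -- (1) f is subproper
        ∃ Z : Set X, f '' Z = univ ∧
          ∀ K : Set Y, IsCompact K → IsCompact (closure (Z ∩ f ⁻¹' K)),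
        -- (2) f has a section preserving precompact sets
        ∃ s : Y → X, (∀ y, f (s y) = y) ∧
          ∀ K : Set Y, IsCompact K → IsCompact (closure (s '' K)),
        -- (3) monotone compact-valued section of 𝒦(f)
        ∃ s : Set Y → Set X,
          (∀ K : Set Y, IsCompact K → IsCompact (s K) ∧ f '' s K = K) ∧
          (∀ K K' : Set Y, IsCompact K → IsCompact K' → K ⊆ K' → s K ⊆ s K'),
        -- (4) additive compact-valued section of 𝒦(f)
        ∃ s : Set Y → Set X,
          (∀ K : Set Y, IsCompact K → IsCompact (s K) ∧ f '' s K = K) ∧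
          (∀ K K' : Set Y, IsCompact K → IsCompact K' →
            s (K ∪ K') = s K ∪ s K') ] :=
  stmt_0_general f hf
end

section
/- Let X and Y be Hausdorff topological spaces such that X is μ-complete and every compact subset of Y is sequentially compact. Then a function s : Y → X preserves precompact sets if and only if s is cs*-continuous. -/
/-!
A cs*-continuous map sends a sequentially compact set `K` to a set in which every sequence
has a cluster point: lift the sequence to `K`, pass to a convergent subsequence and apply
cs*-continuity. Such a set is bounded, because points chosen in infinitely many distinct
members of a locally finite family cannot cluster anywhere; μ-completeness then makes its
closure compact. Conversely, a convergent sequence together with its limit is compact, so the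
closure of its image is compact and the image sequence clusters in it.
-/

open Filter Topology Set

universe u v

/-- A function `s : Y → X` preserves precompact sets if the image of every compact
set has compact closure. -/
def PreservesPrecompact {X : Type u} {Y : Type v} [TopologicalSpace X] [TopologicalSpace Y]
    (s : Y → X) : Prop :=
  ∀ K : Set Y, IsCompact K → IsCompact (closure (s '' K))

/-- A function `s : Y → X` is cs*-continuous if for every convergent sequence `(y n)` in `Y`
the image sequence `(s (y n))` has an accumulation (cluster) point in `X`. -/
def CsStarContinuous {X : Type u} {Y : Type v} [TopologicalSpace X] [TopologicalSpace Y]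
    (s : Y → X) : Prop :=
  ∀ (y : ℕ → Y) (a : Y), Tendsto y atTop (𝓝 a) →
    ∃ x : X, MapClusterPt x atTop (fun n => s (y n))

/-- A subset `B` of a topological space is bounded if every locally finite family of open
sets has only finitely many members meeting `B`. -/
def BoundedSubset {X : Type u} [TopologicalSpace X] (B : Set X) : Prop :=
  ∀ 𝒰 : Set (Set X), (∀ U ∈ 𝒰, IsOpen U) →
    LocallyFinite (fun U : 𝒰 => (U : Set X)) →
    {U ∈ 𝒰 | (U ∩ B).Nonempty}.Finite

/-- A space is μ-complete if every bounded subset has compact closure. -/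
def MuComplete (X : Type u) [TopologicalSpace X] : Prop :=
  ∀ B : Set X, BoundedSubset B → IsCompact (closure B)

section

variable {X : Type u} {Y : Type v} [TopologicalSpace X] [TopologicalSpace Y]

theorem LocallyFinite.not_mapClusterPt_of_forall_mem {ι : Type*} {f : ι → Set X}
    (hf : LocallyFinite f) {x : ι → X} (hx : ∀ i, x i ∈ f i) (p : X) :
    ¬MapClusterPt p cofinite x := by
  intro hp
  obtain ⟨V, hV, hfin⟩ := hf p
  obtain ⟨i, hiV, hi⟩ :=
    ((hp.frequently hV).and_eventually hfin.eventually_cofinite_notMem).exists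
  exact hi ⟨x i, hx i, hiV⟩

theorem boundedSubset_of_forall_seq_mapClusterPt {B : Set X}
    (hB : ∀ x : ℕ → X, (∀ n, x n ∈ B) → ∃ p, MapClusterPt p atTop x) : BoundedSubset B := by
  intro 𝒰 _ h𝒰
  by_contra hinf
  let U : ℕ ↪ {V ∈ 𝒰 | (V ∩ B).Nonempty} := (Set.infinite_coe_iff.2 hinf).natEmbedding
  let member : ℕ → 𝒰 := inclusion (sep_subset _ _) ∘ U
  have hmember : Function.Injective member := (inclusion_injective _).comp U.injective
  choose x hxU hxB using fun n => (U n).2.2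
  obtain ⟨p, hp⟩ := hB x hxB
  exact (h𝒰.comp_injective hmember).not_mapClusterPt_of_forall_mem hxU p
    (Nat.cofinite_eq_atTop ▸ hp)

theorem PreservesPrecompact.csStarContinuous {s : Y → X} (hs : PreservesPrecompact s) :
    CsStarContinuous s := by
  intro y a hy
  have hmem : Tendsto (fun n => s (y n)) atTop (𝓟 (closure (s '' insert a (range y)))) :=
    tendsto_principal.2 <| .of_forall fun n =>
      subset_closure <| mem_image_of_mem s <| mem_insert_of_mem a (mem_range_self n)
  obtain ⟨x, -, hx⟩ := (hs _ hy.isCompact_insert_range).exists_clusterPt hmem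
  exact ⟨x, hx⟩

theorem CsStarContinuous.exists_mapClusterPt_of_forall_mem_image {s : Y → X}
    (hs : CsStarContinuous s) {K : Set Y} (hK : IsSeqCompact K) (x : ℕ → X)
    (hx : ∀ n, x n ∈ s '' K) : ∃ p, MapClusterPt p atTop x := by
  choose y hyK hyx using hx
  obtain ⟨a, -, φ, hφ, hconv⟩ := hK hyK
  obtain ⟨p, hp⟩ := hs (y ∘ φ) a hconv
  refine ⟨p, MapClusterPt.of_comp hφ.tendsto_atTop ?_⟩
  simpa only [Function.comp_def, hyx] using hp

end

theorem stmt_1_general {X : Type u} {Y : Type v} [TopologicalSpace X] [TopologicalSpace Y]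
    (hX : MuComplete X) (hY : ∀ K : Set Y, IsCompact K → IsSeqCompact K)
    (s : Y → X) :
    PreservesPrecompact s ↔ CsStarContinuous s :=
  ⟨PreservesPrecompact.csStarContinuous, fun hs K hK =>
    hX _ <| boundedSubset_of_forall_seq_mapClusterPt <|
      hs.exists_mapClusterPt_of_forall_mem_image (hY K hK)⟩

/-- If `X` is μ-complete and every compact subset of `Y` is sequentially
compact, then `s : Y → X` preserves precompact sets iff `s` is cs*-continuous. -/
theorem stmt_1 {X : Type u} {Y : Type v} [TopologicalSpace X] [TopologicalSpace Y]
    [T2Space X] [T2Space Y]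
    (hX : MuComplete X) (hY : ∀ K : Set Y, IsCompact K → IsSeqCompact K)
    (s : Y → X) :
    PreservesPrecompact s ↔ CsStarContinuous s :=
  stmt_1_general hX hY s
end

section
/- Let f : X → Y be a continuous closed surjection between Hausdorff topological spaces. Then every section s : Y → X of f is cs*-continuous. Moreover, if X is μ-complete, then every section s : Y → X of f preserves precompact sets. -/
open Filter Topology Set

universe u v

/-!
If the sequence `s ∘ y` has no cluster point, its points form a locally finite family, so every
subsequence of it has closed range; as `f` is closed, so does every subsequence of
`y = f ∘ s ∘ y`. A cluster point `a` of `y` is then attained infinitely often, and `s a` is a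
cluster point of `s ∘ y`. Convergent sequences and sequences in a compact set have cluster points,
and a set in which every sequence has a cluster point meets only finitely many members of a
locally finite family.
-/

lemma locallyFinite_singleton_of_forall_not_mapClusterPt {X : Type u} [TopologicalSpace X]
    {u : ℕ → X} (h : ∀ x, ¬MapClusterPt x atTop u) : LocallyFinite fun n => ({u n} : Set X) := by
  intro x
  obtain ⟨V, hV, hfin⟩ : ∃ V ∈ 𝓝 x, ∀ᶠ n in atTop, u n ∉ V := by
    simpa [mapClusterPt_iff_frequently] using h x
  have hV_fin : {n | u n ∈ V}.Finite :=
    Set.not_infinite.mp fun hinf => Nat.frequently_atTop_iff_infinite.mpr hinf hfin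
  exact ⟨V, hV, by simpa only [Set.singleton_inter_nonempty] using hV_fin⟩

lemma isClosed_image_of_forall_not_mapClusterPt {X : Type u} [TopologicalSpace X] [T1Space X]
    {u : ℕ → X} (h : ∀ x, ¬MapClusterPt x atTop u) (S : Set ℕ) : IsClosed (u '' S) := by
  rw [Set.image_eq_range, ← Set.iUnion_singleton_eq_range]
  exact ((locallyFinite_singleton_of_forall_not_mapClusterPt h).comp_injective
    Subtype.val_injective).isClosed_iUnion fun _ => isClosed_singleton

lemma LocallyFinite.not_mapClusterPt {ι X : Type*} [TopologicalSpace X] {U : ι → Set X}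
    (hU : LocallyFinite U) {i : ℕ → ι} (hi : Function.Injective i) {u : ℕ → X}
    (hu : ∀ n, u n ∈ U (i n)) (x : X) : ¬MapClusterPt x atTop u := by
  intro hx
  obtain ⟨V, hV, hfin⟩ := hU x
  have hinf : {n | u n ∈ V}.Infinite :=
    Nat.frequently_atTop_iff_infinite.mp (mapClusterPt_iff_frequently.mp hx V hV)
  exact hinf ((hfin.preimage hi.injOn).subset fun n hn => ⟨u n, hu n, hn⟩)

lemma IsClosedMap.exists_mapClusterPt_comp {X : Type u} {Y : Type v} [TopologicalSpace X]
    [TopologicalSpace Y] [T1Space X] {f : X → Y} (hf : IsClosedMap f) {s : Y → X}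
    (hs : ∀ y, f (s y) = y) {y : ℕ → Y} {a : Y} (ha : MapClusterPt a atTop y) :
    ∃ x, MapClusterPt x atTop (s ∘ y) := by
  by_contra! h
  have hy : f ∘ s ∘ y = y := funext fun n => hs (y n)
  have hclosed : IsClosed (y '' {n | y n ≠ a}) := by
    rw [← hy, Set.image_comp]
    exact hf _ (isClosed_image_of_forall_not_mapClusterPt h _)
  have hfreq : ∃ᶠ n in atTop, y n = a := by
    by_contra hev
    rw [not_frequently] at hev
    obtain ⟨n, hn, hna⟩ := hclosed.mem_of_mapClusterPt ha (hev.mono fun n hn => ⟨n, hn, rfl⟩)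
    exact hn hna
  refine h (s a) (mapClusterPt_iff_frequently.mpr fun V hV => ?_)
  exact hfreq.mono fun n hn => by simpa [hn] using mem_of_mem_nhds hV

lemma boundedSubset_of_forall_exists_mapClusterPt {X : Type u} [TopologicalSpace X] {B : Set X}
    (h : ∀ u : ℕ → X, (∀ n, u n ∈ B) → ∃ x, MapClusterPt x atTop u) : BoundedSubset B := by
  intro 𝒰 _ hlf
  by_contra hinf
  let e := Set.Infinite.natEmbedding _ hinf
  choose u hu hB using fun n => (e n).2.2
  obtain ⟨x, hx⟩ := h u hB
  refine hlf.not_mapClusterPt (i := fun n => ⟨e n, (e n).2.1⟩) ?_ hu x hx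
  intro m n hmn
  exact e.injective (Subtype.ext (by simpa using hmn))

theorem stmt_2_general {X : Type u} {Y : Type v} [TopologicalSpace X] [TopologicalSpace Y]
    [T2Space X] (f : X → Y) (hclosed : IsClosedMap f) :
    (∀ s : Y → X, (∀ y, f (s y) = y) → CsStarContinuous s) ∧
    (MuComplete X → ∀ s : Y → X, (∀ y, f (s y) = y) →
      ∀ K : Set Y, IsCompact K → IsCompact (closure (s '' K))) := by
  refine ⟨fun s hs y a hya => hclosed.exists_mapClusterPt_comp hs hya.mapClusterPt,
    fun hmu s hs K hK => hmu _ (boundedSubset_of_forall_exists_mapClusterPt ?_)⟩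
  intro u hu
  choose v hvK hv using hu
  obtain ⟨a, -, ha⟩ :=
    hK.exists_mapClusterPt (f := atTop) (tendsto_principal.mpr (.of_forall hvK))
  rw [← funext hv]
  exact hclosed.exists_mapClusterPt_comp hs ha

/-- Every section of a continuous closed surjection between Hausdorff spaces
is cs*-continuous; moreover, if the domain is μ-complete then every section preserves
precompact sets. -/
theorem stmt_2 {X : Type u} {Y : Type v} [TopologicalSpace X] [TopologicalSpace Y]
    [T2Space X] [T2Space Y] (f : X → Y) (hf : Continuous f)
    (hclosed : IsClosedMap f) (hsurj : Function.Surjective f) :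
    (∀ s : Y → X, (∀ y, f (s y) = y) → CsStarContinuous s) ∧
    (MuComplete X → ∀ s : Y → X, (∀ y, f (s y) = y) →
      ∀ K : Set Y, IsCompact K → IsCompact (closure (s '' K))) :=
  stmt_2_general f hclosed
end

section
/- Let f : X → Y be a continuous surjection from a μ-complete Hausdorff space X onto a Fréchet–Urysohn Hausdorff space Y. Then the following conditions are equivalent: (1) f is subproper; (2) f has a section preserving precompact sets; (3) f has a cs*-continuous section; (4) f is inductively closed, i.e. there is a closed set Z ⊆ X with f(Z) = Y such that the restriction f|Z : Z → Y is a closed map. -/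
/-!
The core is (3) → (4). For a cs*-continuous section `s`, let `Z` be the set of `x` with `(f x, x)`
in the closure of the graph of `s`; it is closed and contains `s(Y)`. Let `D ⊆ Z` be closed and
`f (x n) → b` with `x n ∈ D`, `f (x n) ≠ b`. By μ-completeness it suffices that `{x n}` is bounded,
for then `(x n)` clusters at a point of `D` over `b`. If open sets `V i`, locally finite, contain
`x (n i)`, then `f (x (n i)) → b` lies in the closure of `s⁻¹(V i)`, and the Fréchet–Urysohn
property yields a sequence converging to `b` whose `s`-images meet infinitely many `V i`; they have
no cluster point, against cs*-continuity. The same mechanism shows that cs*-continuous sections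
preserve precompact sets, and (4) → (3) holds because a sequence without cluster points has closed
range.
-/

open Filter Topology Set

universe u v

theorem LocallyFinite.not_mapClusterPt_s3 {ι α X : Type*} [TopologicalSpace X] {V : ι → Set X}
    (hV : LocallyFinite V) {l : Filter α} {u : α → X} {j : α → ι} (hj : Tendsto j l cofinite)
    (hu : ∀ a, u a ∈ V (j a)) (x : X) : ¬MapClusterPt x l u := by
  intro hx
  obtain ⟨N, hN, hfin⟩ := hV x
  obtain ⟨a, haN, haj⟩ := ((mapClusterPt_iff_frequently.mp hx N hN).and_eventually
    (hj.eventually hfin.eventually_cofinite_notMem)).exists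
  exact haj ⟨u a, hu a, haN⟩

theorem exists_locallyFinite_of_not_boundedSubset {X : Type*} [TopologicalSpace X] {B : Set X}
    (hB : ¬BoundedSubset B) :
    ∃ V : ℕ → Set X, (∀ i, IsOpen (V i)) ∧ LocallyFinite V ∧ ∀ i, (V i ∩ B).Nonempty := by
  simp only [BoundedSubset, not_forall] at hB
  obtain ⟨𝒰, hopen, hlf, hinf⟩ := hB
  let e := Set.Infinite.natEmbedding _ hinf
  refine ⟨fun i => e i, fun i => hopen _ (e i).2.1, ?_, fun i => (e i).2.2⟩
  exact hlf.comp_injective (g := fun i => ⟨e i, (e i).2.1⟩)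
    fun i j h => e.injective (Subtype.ext (Subtype.mk.inj h))

theorem exists_mapClusterPt_of_isCompact_closure {X : Type*} [TopologicalSpace X] {B : Set X}
    (hB : IsCompact (closure B)) {u : ℕ → X} (hu : ∀ n, u n ∈ B) : ∃ x, MapClusterPt x atTop u :=
  let ⟨x, _, hx⟩ := hB.exists_mapClusterPt
    (tendsto_principal.mpr (Eventually.of_forall fun n => subset_closure (hu n)))
  ⟨x, hx⟩

theorem FrechetUrysohnSpace.exists_tendsto_of_mem_closure_iUnion {ι Y : Type*}
    [TopologicalSpace Y] [FrechetUrysohnSpace Y] {C : ι → Set Y} {b : Y}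
    (hb : b ∈ closure (⋃ i, C i)) (hC : ∀ i, b ∉ closure (C i)) :
    ∃ (z : ℕ → Y) (j : ℕ → ι), Tendsto z atTop (𝓝 b) ∧ Tendsto j atTop cofinite ∧
      ∀ k, z k ∈ C (j k) := by
  obtain ⟨z, hzC, hzb⟩ := mem_closure_iff_seq_limit.mp hb
  choose j hj using fun k => mem_iUnion.mp (hzC k)
  refine ⟨z, j, hzb, le_cofinite_iff_compl_singleton_mem.mpr fun i => mem_map.mpr ?_, hj⟩
  filter_upwards [hzb.eventually (isClosed_closure.isOpen_compl.mem_nhds (hC i))] with k hk hki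
  exact hk (hki ▸ subset_closure (hj k))

theorem MapClusterPt.exists_tendsto_comp {Y : Type*} [TopologicalSpace Y] [FrechetUrysohnSpace Y]
    [T1Space Y] {y : ℕ → Y} {a : Y} (ha : MapClusterPt a atTop y) :
    ∃ j : ℕ → ℕ, Tendsto j atTop atTop ∧ Tendsto (y ∘ j) atTop (𝓝 a) := by
  by_cases hfreq : ∃ᶠ i in atTop, y i = a
  · obtain ⟨φ, hφ, hφa⟩ := extraction_of_frequently_atTop hfreq
    exact ⟨φ, hφ.tendsto_atTop, by simp [Function.comp_def, hφa]⟩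
  have hne : ∀ᶠ i in atTop, y i ≠ a := not_frequently.mp hfreq
  have hmem : a ∈ closure (⋃ i, {y i} \ {a}) := by
    refine mem_closure_iff_nhds.mpr fun N hN => ?_
    obtain ⟨i, hiN, hia⟩ := ((mapClusterPt_iff_frequently.mp ha N hN).and_eventually hne).exists
    exact ⟨y i, hiN, mem_iUnion.mpr ⟨i, rfl, hia⟩⟩
  have hnot : ∀ i, a ∉ closure ({y i} \ {a}) := fun i h => by
    rw [((finite_singleton _).sdiff).isClosed.closure_eq] at h
    exact h.2 rfl
  obtain ⟨z, j, hza, hj, hzy⟩ :=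
    FrechetUrysohnSpace.exists_tendsto_of_mem_closure_iUnion hmem hnot
  have hyj : y ∘ j = z := funext fun k => ((hzy k).1).symm
  exact ⟨j, Nat.cofinite_eq_atTop ▸ hj, hyj ▸ hza⟩

theorem CsStarContinuous.isCompact_closure_image {X Y : Type*} [TopologicalSpace X]
    [TopologicalSpace Y] [T1Space Y] [FrechetUrysohnSpace Y] (hX : MuComplete X) {s : Y → X}
    (hs : CsStarContinuous s) {K : Set Y} (hK : IsCompact K) : IsCompact (closure (s '' K)) := by
  refine hX _ (by_contra fun hB => ?_)
  obtain ⟨V, -, hV, hVK⟩ := exists_locallyFinite_of_not_boundedSubset hB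
  choose y hyK hyV using fun i => show ∃ y ∈ K, s y ∈ V i by
    obtain ⟨_, hV, y, hy, rfl⟩ := hVK i
    exact ⟨y, hy, hV⟩
  obtain ⟨a, -, ha⟩ :=
    hK.exists_mapClusterPt (f := atTop) (tendsto_principal.mpr (Eventually.of_forall hyK))
  obtain ⟨j, hj, hyj⟩ := ha.exists_tendsto_comp
  obtain ⟨x, hx⟩ := hs _ a hyj
  exact hV.not_mapClusterPt_s3 (Nat.cofinite_eq_atTop ▸ hj) (fun k => hyV (j k)) x hx

/-- The witness `Z` for (4): the points `x` that are cluster values of `s` at `f x`. -/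
def sectionClusterSet {X Y : Type*} [TopologicalSpace X] [TopologicalSpace Y] (f : X → Y)
    (s : Y → X) : Set X :=
  (fun x => (f x, x)) ⁻¹' closure (Function.graph s)

section SectionClusterSet

variable {X Y : Type*} [TopologicalSpace X] [TopologicalSpace Y] {f : X → Y} {s : Y → X}

theorem isClosed_sectionClusterSet (hf : Continuous f) : IsClosed (sectionClusterSet f s) :=
  isClosed_closure.preimage (hf.prodMk continuous_id)

theorem apply_mem_sectionClusterSet (hs : ∀ y, f (s y) = y) (y : Y) : s y ∈ sectionClusterSet f s :=
  subset_closure (by simp [hs])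

theorem apply_mem_closure_preimage_of_mem_sectionClusterSet {x : X}
    (hx : x ∈ sectionClusterSet f s) {V : Set X} (hV : IsOpen V) (hxV : x ∈ V) :
    f x ∈ closure (s ⁻¹' V) := by
  refine mem_closure_iff.mpr fun W hW hxW => ?_
  obtain ⟨⟨y, _⟩, ⟨hyW, hV'⟩, hgraph⟩ := mem_closure_iff.mp hx _ (hW.prod hV) ⟨hxW, hxV⟩
  rw [Function.mem_graph] at hgraph
  exact ⟨y, hyW, show s y ∈ V from hgraph ▸ hV'⟩

variable [T2Space Y] [FrechetUrysohnSpace Y]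

theorem exists_mapClusterPt_of_mem_sectionClusterSet (hX : MuComplete X)
    (hcs : CsStarContinuous s) {x : ℕ → X} (hxZ : ∀ n, x n ∈ sectionClusterSet f s) {b : Y}
    (hxb : Tendsto (f ∘ x) atTop (𝓝 b)) (hne : ∀ n, f (x n) ≠ b) :
    ∃ p, MapClusterPt p atTop x := by
  refine exists_mapClusterPt_of_isCompact_closure (hX _ (by_contra fun hB => ?_)) mem_range_self
  obtain ⟨V, hVo, hV, hVx⟩ := exists_locallyFinite_of_not_boundedSubset hB
  choose n hn using fun i => show ∃ n, x n ∈ V i by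
    obtain ⟨_, hV, n, rfl⟩ := hVx i
    exact ⟨n, hV⟩
  have hn_tendsto : Tendsto n atTop atTop := by
    rw [← Nat.cofinite_eq_atTop]
    exact fun _ h => h.preimage' fun m _ =>
      (hV.point_finite (x m)).subset fun i him => him ▸ hn i
  choose U U' hU hU' hqU hbU' hUU' using fun i => t2_separation (hne (n i))
  -- Separating `f (x (n i))` from `b` makes `b` avoid the closure of each piece.
  let C i := U i ∩ s ⁻¹' V i
  have hqC : ∀ i, f (x (n i)) ∈ closure (C i) := fun i =>
    (hU i).inter_closure
      ⟨hqU i, apply_mem_closure_preimage_of_mem_sectionClusterSet (hxZ _) (hVo i) (hn i)⟩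
  have hbC : ∀ i, b ∉ closure (C i) := fun i hb =>
    disjoint_left.mp ((hUU' i).symm.closure_right (hU' i)) (hbU' i)
      (closure_mono inter_subset_left hb)
  have hbC' : b ∈ closure (⋃ i, C i) := closure_closure (s := ⋃ i, C i) ▸
    mem_closure_of_tendsto (hxb.comp hn_tendsto)
      (Eventually.of_forall fun i => closure_mono (subset_iUnion C i) (hqC i))
  obtain ⟨z, j, hzb, hj, hzC⟩ := FrechetUrysohnSpace.exists_tendsto_of_mem_closure_iUnion hbC' hbC
  obtain ⟨p, hp⟩ := hcs z b hzb
  exact hV.not_mapClusterPt_s3 hj (fun k => (hzC k).2) p hp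

theorem isClosed_image_of_subset_sectionClusterSet (hX : MuComplete X) (hf : Continuous f)
    (hcs : CsStarContinuous s) {D : Set X} (hD : IsClosed D)
    (hDZ : D ⊆ sectionClusterSet f s) : IsClosed (f '' D) := by
  refine closure_subset_iff_isClosed.mp fun b hb => by_contra fun hbD => ?_
  obtain ⟨y, hyD, hyb⟩ := mem_closure_iff_seq_limit.mp hb
  choose x hxD hxy using hyD
  have hfx : f ∘ x = y := funext hxy
  obtain ⟨p, hp⟩ := exists_mapClusterPt_of_mem_sectionClusterSet hX hcs (fun n => hDZ (hxD n))
    (hfx ▸ hyb) fun n h => hbD ⟨x n, hxD n, h⟩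
  have hpD : p ∈ D := hD.mem_of_mapClusterPt hp (Eventually.of_forall hxD)
  have hfp : f p = b :=
    eq_of_nhds_neBot ((hfx ▸ hp.continuousAt_comp hf.continuousAt).clusterPt.mono hyb)
  exact hbD ⟨p, hpD, hfp⟩

theorem exists_isClosedMap_restrict_of_csStarContinuous (hX : MuComplete X) (hf : Continuous f)
    (hs : ∀ y, f (s y) = y) (hcs : CsStarContinuous s) :
    ∃ Z : Set X, IsClosed Z ∧ f '' Z = univ ∧ IsClosedMap (fun z : Z => f z) := by
  have hZ := isClosed_sectionClusterSet (s := s) hf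
  refine ⟨_, hZ, eq_univ_of_forall fun y => ⟨s y, apply_mem_sectionClusterSet hs y, hs y⟩,
    fun C hC => ?_⟩
  rw [← image_image f Subtype.val]
  exact isClosed_image_of_subset_sectionClusterSet hX hf hcs
    (hZ.isClosedMap_subtype_val C hC) (Subtype.coe_image_subset _ C)

end SectionClusterSet

theorem isClosed_of_subset_range_of_forall_not_mapClusterPt {X : Type*} [TopologicalSpace X]
    [T1Space X] {u : ℕ → X} (hu : ∀ p, ¬MapClusterPt p atTop u) {S : Set X}
    (hS : S ⊆ range u) : IsClosed S := by
  refine closure_subset_iff_isClosed.mp fun p hp => by_contra fun hpS => ?_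
  obtain ⟨N, hN, hNu⟩ : ∃ N ∈ 𝓝 p, {n | u n ∈ N}.Finite := by
    simpa [mapClusterPt_iff_frequently, ← Nat.cofinite_eq_atTop] using hu p
  have hnhds : N ∩ (u '' {n | u n ∈ N} \ {p})ᶜ ∈ 𝓝 p :=
    inter_mem hN (((hNu.image u).sdiff).isClosed.isOpen_compl.mem_nhds fun h => h.2 rfl)
  obtain ⟨_, ⟨hqN, hq⟩, hqS⟩ := mem_closure_iff_nhds.mp hp _ hnhds
  obtain ⟨n, rfl⟩ := hS hqS
  exact hq ⟨⟨n, hqN, rfl⟩, fun h => hpS (h ▸ hqS)⟩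

theorem exists_csStarContinuous_section_of_isClosedMap {X Y : Type*} [TopologicalSpace X]
    [TopologicalSpace Y] [T1Space X] {f : X → Y} {Z : Set X} (hZ : f '' Z = univ)
    (hfZ : IsClosedMap (fun z : Z => f z)) :
    ∃ s : Y → X, (∀ y, f (s y) = y) ∧ CsStarContinuous s := by
  choose s hsZ hs using fun y => hZ.ge (mem_univ y)
  refine ⟨s, hs, fun y a hya => ?_⟩
  by_contra! hno
  have hS : IsClosed (s '' (range y \ {a})) :=
    isClosed_of_subset_range_of_forall_not_mapClusterPt hno (by
      rintro _ ⟨_, ⟨⟨n, rfl⟩, -⟩, rfl⟩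
      exact mem_range_self n)
  have hclosed : IsClosed (range y \ {a}) := by
    have := hfZ _ (hS.preimage continuous_subtype_val)
    rw [← image_image f Subtype.val, Subtype.image_preimage_coe,
      inter_eq_right.mpr (image_subset_iff.mpr fun y _ => hsZ y), image_image] at this
    simpa only [hs, image_id'] using this
  have hya' : ∀ᶠ n in atTop, y n = a := by
    filter_upwards [hya.eventually (hclosed.isOpen_compl.mem_nhds fun h => h.2 rfl)] with n hn
    by_contra hna
    exact hn ⟨mem_range_self n, hna⟩
  exact hno (s a) (tendsto_nhds_of_eventually_eq (hya'.mono fun n hn => by rw [hn])).mapClusterPt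

theorem stmt_3_general {X : Type u} {Y : Type v} [TopologicalSpace X] [TopologicalSpace Y]
    [T2Space X] [T2Space Y] [FrechetUrysohnSpace Y]
    (hX : MuComplete X) (f : X → Y) (hf : Continuous f) :
    List.TFAE
      [ -- (1) f is subproper
        ∃ Z : Set X, f '' Z = univ ∧
          ∀ K : Set Y, IsCompact K → IsCompact (closure (Z ∩ f ⁻¹' K)),
        -- (2) f has a section preserving precompact sets
        ∃ s : Y → X, (∀ y, f (s y) = y) ∧
          ∀ K : Set Y, IsCompact K → IsCompact (closure (s '' K)),
        -- (3) f has a cs*-continuous section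
        ∃ s : Y → X, (∀ y, f (s y) = y) ∧ CsStarContinuous s,
        -- (4) f is inductively closed
        ∃ Z : Set X, IsClosed Z ∧ f '' Z = univ ∧
          IsClosedMap (fun z : Z => f z) ] := by
  tfae_have 1 → 2
  | ⟨Z, hZ, hZK⟩ => by
    choose s hsZ hs using fun y => hZ.ge (mem_univ y)
    refine ⟨s, hs, fun K hK => (hZK K hK).of_isClosed_subset isClosed_closure (closure_mono ?_)⟩
    rintro _ ⟨y, hy, rfl⟩
    exact ⟨hsZ y, by rwa [mem_preimage, hs]⟩
  tfae_have 2 → 1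
  | ⟨s, hs, hsK⟩ => by
    refine ⟨range s, eq_univ_of_forall fun y => ⟨s y, mem_range_self y, hs y⟩, fun K hK => ?_⟩
    rw [← Function.LeftInverse.image_eq hs]
    exact hsK K hK
  tfae_have 2 → 3
  | ⟨s, hs, hsK⟩ => ⟨s, hs, fun y a hya => exists_mapClusterPt_of_isCompact_closure
      (hsK _ hya.isCompact_insert_range) fun n => mem_image_of_mem s (mem_insert_of_mem a ⟨n, rfl⟩)⟩
  tfae_have 3 → 2
  | ⟨s, hs, hcs⟩ => ⟨s, hs, fun _ hK => hcs.isCompact_closure_image hX hK⟩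
  tfae_have 3 → 4
  | ⟨s, hs, hcs⟩ => exists_isClosedMap_restrict_of_csStarContinuous hX hf hs hcs
  tfae_have 4 → 3
  | ⟨_, _, hZ, hfZ⟩ => exists_csStarContinuous_section_of_isClosedMap hZ hfZ
  tfae_finish

/-- For a continuous surjection `f : X → Y` from a μ-complete Hausdorff
space onto a Fréchet–Urysohn Hausdorff space, the following are equivalent:
(1) `f` is subproper; (2) `f` has a section preserving precompact sets;
(3) `f` has a cs*-continuous section; (4) `f` is inductively closed. -/
theorem stmt_3 {X : Type u} {Y : Type v} [TopologicalSpace X] [TopologicalSpace Y]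
    [T2Space X] [T2Space Y] [FrechetUrysohnSpace Y]
    (hX : MuComplete X) (f : X → Y) (hf : Continuous f)
    (hsurj : Function.Surjective f) :
    List.TFAE
      [ -- (1) f is subproper
        ∃ Z : Set X, f '' Z = univ ∧
          ∀ K : Set Y, IsCompact K → IsCompact (closure (Z ∩ f ⁻¹' K)),
        -- (2) f has a section preserving precompact sets
        ∃ s : Y → X, (∀ y, f (s y) = y) ∧
          ∀ K : Set Y, IsCompact K → IsCompact (closure (s '' K)),
        -- (3) f has a cs*-continuous section
        ∃ s : Y → X, (∀ y, f (s y) = y) ∧ CsStarContinuous s,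
        -- (4) f is inductively closed
        ∃ Z : Set X, IsClosed Z ∧ f '' Z = univ ∧
          IsClosedMap (fun z : Z => f z) ] :=
  stmt_3_general hX f hf
end

section
/- A sequentially regular Hausdorff topological space X is k*-metrizable if and only if there exists a metric ρ on the underlying set of X such that: (a) every compact subset K ⊆ X is totally bounded with respect to ρ; (b) every sequence (x_n) with ρ(x_n, x) → 0 converges to x in the topology of X; (c) a ρ-Cauchy sequence converges in X if and only if it has a subsequence converging in X. -/
open Filter Topology Set

universe u

/-- A Hausdorff space `X` is k*-metrizable if it is the image of a metrizable space `M`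
under a continuous surjection admitting a section which preserves precompact sets. -/
def KStarMetrizable (X : Type u) [TopologicalSpace X] : Prop :=
  ∃ (M : Type u) (_ : MetricSpace M) (f : M → X) (s : X → M),
    Continuous f ∧ Function.Surjective f ∧ (∀ x, f (s x) = x) ∧
    ∀ K : Set X, IsCompact K → IsCompact (closure (s '' K))

/-- A space is sequentially regular if each point has arbitrarily small neighborhoods
whose sequential closures stay inside a given neighborhood. -/
def SeqRegular (X : Type u) [TopologicalSpace X] : Prop :=
  ∀ x : X, ∀ U ∈ 𝓝 x, ∃ V ∈ 𝓝 x, seqClosure V ⊆ U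

/-!
Pulling back the metric of `M` along the section `s` gives `ρ`; (c) holds because the closure
of the image under `s` of a convergent subsequence together with its limit is compact.

Conversely, give `X` the metric `ρ` and let `M` consist of the points of its completion that
are limits of sequences converging in `X`. Interleaving two such sequences and using (c) shows
that the limit in `X` depends only on the point of `M`, which defines `f : M → X` with the
identity as a section. Sequential regularity makes `f` continuous by a diagonal argument.
A compact `K ⊆ X` is a continuous image of the separable metric space `(K, ρ)`, hence
metrizable and sequentially compact; so every point of the closure of `K` in the completion,
a compact set by (a), lies in `M`, and the closure of `K` in `M` is compact.
-/

open Function TopologicalSpace UniformSpace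

section Metrizability

variable {Y : Type*} [TopologicalSpace Y] [CompactSpace Y] [T2Space Y]

/-- Urysohn functions separating the closures of pairs of network elements embed `Y` into
a countable power of `ℝ`. -/
theorem metrizableSpace_of_countable_network {ι : Type*} [Countable ι] (N : ι → Set Y)
    (hN : ∀ y, ∀ U ∈ 𝓝 y, ∃ i, y ∈ N i ∧ N i ⊆ U) : MetrizableSpace Y := by
  have hurysohn : ∀ p : ι × ι, ∃ φ : C(Y, ℝ), Disjoint (closure (N p.1)) (closure (N p.2)) →
      EqOn φ 0 (closure (N p.1)) ∧ EqOn φ 1 (closure (N p.2)) := by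
    intro p
    by_cases hd : Disjoint (closure (N p.1)) (closure (N p.2))
    · obtain ⟨φ, h0, h1, -⟩ := exists_continuous_zero_one_of_isClosed isClosed_closure
        isClosed_closure hd
      exact ⟨φ, fun _ => ⟨h0, h1⟩⟩
    · exact ⟨0, fun h => absurd h hd⟩
  choose φ hφ using hurysohn
  have hinj : Injective fun y p => φ p y := by
    intro a b hab
    by_contra hne
    obtain ⟨U, ⟨hU, hUc⟩, V, ⟨hV, hVc⟩, hUV⟩ :=
      ((closed_nhds_basis a).disjoint_iff (closed_nhds_basis b)).1 (disjoint_nhds_nhds.2 hne)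
    obtain ⟨i, hai, hiU⟩ := hN a U hU
    obtain ⟨j, hbj, hjV⟩ := hN b V hV
    have hd : Disjoint (closure (N i)) (closure (N j)) :=
      hUV.mono (closure_minimal hiU hUc) (closure_minimal hjV hVc)
    have hij : φ (i, j) a = φ (i, j) b := congr_fun hab (i, j)
    rw [(hφ (i, j) hd).1 (subset_closure hai), (hφ (i, j) hd).2 (subset_closure hbj)] at hij
    exact zero_ne_one hij
  exact (Continuous.isClosedEmbedding (by fun_prop) hinj).isEmbedding.metrizableSpace

theorem metrizableSpace_of_continuous_surjective {S : Type*} [TopologicalSpace S]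
    [SecondCountableTopology S] {g : S → Y} (hg : Continuous g) (hsurj : Surjective g) :
    MetrizableSpace Y := by
  have := (countable_countableBasis S).to_subtype
  refine metrizableSpace_of_countable_network (fun B : countableBasis S => g '' B) ?_
  intro y U hU
  obtain ⟨x, rfl⟩ := hsurj y
  obtain ⟨B, hB, hxB, hBU⟩ := (isBasis_countableBasis S).mem_nhds_iff.1 (hg.continuousAt hU)
  exact ⟨⟨B, hB⟩, mem_image_of_mem g hxB, image_subset_iff.2 hBU⟩

end Metrizability

theorem IsCompact.isSeqCompact_of_totallyBounded_image {X M : Type*} [TopologicalSpace X]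
    [T2Space X] [PseudoMetricSpace M] {g : M → X} {h : X → M} (hg : Continuous g)
    (hgh : LeftInverse g h) {K : Set X} (hK : IsCompact K) (htb : TotallyBounded (h '' K)) :
    IsSeqCompact K := by
  have := isCompact_iff_compactSpace.1 hK
  have := htb.isSeparable.separableSpace
  have := UniformSpace.secondCountable_of_separable (h '' K)
  let gK : h '' K → K := fun m => ⟨g m, by obtain ⟨x, hx, hxm⟩ := m.2; rwa [← hxm, hgh x]⟩
  have hgK : Surjective gK := fun x =>
    ⟨⟨h x, mem_image_of_mem h x.2⟩, Subtype.ext (hgh x)⟩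
  have := metrizableSpace_of_continuous_surjective (by fun_prop) hgK
  exact isSeqCompact_iff_seqCompactSpace.2 inferInstance

def interleave {α : Type*} (v w : ℕ → α) (n : ℕ) : α := if Even n then v (n / 2) else w (n / 2)

section Interleave

variable {α β : Type*} (v w : ℕ → α)

@[simp]
theorem interleave_two_mul (n : ℕ) : interleave v w (2 * n) = v n := by
  simp [interleave]

@[simp]
theorem interleave_two_mul_add_one (n : ℕ) : interleave v w (2 * n + 1) = w n := by
  simp [interleave, Nat.add_div_of_dvd_right]

theorem comp_interleave (f : α → β) : f ∘ interleave v w = interleave (f ∘ v) (f ∘ w) := by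
  ext n; simp only [comp_apply, interleave, apply_ite f]

theorem Filter.Tendsto.interleave {v w : ℕ → α} {l : Filter α} (hv : Tendsto v atTop l)
    (hw : Tendsto w atTop l) : Tendsto (interleave v w) atTop l :=
  have half := Nat.tendsto_div_const_atTop two_ne_zero
  (hv.comp half).if' (hw.comp half)

end Interleave

section Uniform

variable {X M : Type*} [TopologicalSpace X] [UniformSpace M] (g : M → X)

def CauchySeqConvergesOfSubseq : Prop :=
  ∀ u : ℕ → M, CauchySeq u → ∀ φ : ℕ → ℕ, StrictMono φ → ∀ a,
    Tendsto (g ∘ u ∘ φ) atTop (𝓝 a) → ∃ b, Tendsto (g ∘ u) atTop (𝓝 b)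

variable {g} [T2Space X]

theorem CauchySeqConvergesOfSubseq.tendsto (hc : CauchySeqConvergesOfSubseq g) {u : ℕ → M}
    (hu : CauchySeq u) {φ : ℕ → ℕ} (hφ : StrictMono φ) {a : X}
    (ha : Tendsto (g ∘ u ∘ φ) atTop (𝓝 a)) : Tendsto (g ∘ u) atTop (𝓝 a) := by
  obtain ⟨b, hb⟩ := hc u hu φ hφ a ha
  rwa [tendsto_nhds_unique (hb.comp hφ.tendsto_atTop) ha] at hb

/-- Interleaving `v` and `w` gives a Cauchy sequence, whose image under `g` converges
because its even-indexed part does. -/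
theorem CauchySeqConvergesOfSubseq.tendsto_of_coe (hc : CauchySeqConvergesOfSubseq g)
    {v w : ℕ → M} {ξ : Completion M} (hv : Tendsto (fun n => (v n : Completion M)) atTop (𝓝 ξ))
    (hw : Tendsto (fun n => (w n : Completion M)) atTop (𝓝 ξ)) {a : X}
    (ha : Tendsto (g ∘ v) atTop (𝓝 a)) : Tendsto (g ∘ w) atTop (𝓝 a) := by
  have hcauchy : CauchySeq (interleave v w) := by
    refine (Completion.isUniformInducing_coe M).cauchy_map_iff.1 ?_
    rw [map_map, comp_interleave]
    exact (hv.interleave hw).cauchySeq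
  have hconv : Tendsto (g ∘ interleave v w) atTop (𝓝 a) :=
    hc.tendsto hcauchy (strictMono_mul_left_of_pos two_pos) (by simpa [comp_def] using ha)
  have hodd : StrictMono fun n : ℕ => 2 * n + 1 := strictMono_nat_of_lt_succ fun n => by omega
  simpa [comp_def] using hconv.comp hodd.tendsto_atTop

end Uniform

theorem exists_tendsto_diagonal {Z : Type*} [PseudoMetricSpace Z] {x : ℕ → Z} {ξ : Z}
    {u : ℕ → ℕ → Z} (hx : Tendsto x atTop (𝓝 ξ)) (hu : ∀ k, Tendsto (u k) atTop (𝓝 (x k)))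
    {P : ℕ → ℕ → Prop} (hP : ∃ᶠ k in atTop, ∃ᶠ n in atTop, P k n) :
    ∃ k n : ℕ → ℕ, (∀ j, P (k j) (n j)) ∧ Tendsto (fun j => u (k j) (n j)) atTop (𝓝 ξ) := by
  have hδ : ∀ j : ℕ, (0 : ℝ) < 1 / (j + 1) := fun j => by positivity
  have hpick : ∀ j : ℕ, ∃ k n, P k n ∧ dist (u k n) ξ < 2 * (1 / (j + 1)) := by
    intro j
    obtain ⟨k, hkP, hk⟩ := (hP.and_eventually (Metric.tendsto_nhds.1 hx _ (hδ j))).exists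
    obtain ⟨n, hnP, hn⟩ := (hkP.and_eventually (Metric.tendsto_nhds.1 (hu k) _ (hδ j))).exists
    exact ⟨k, n, hnP, by linarith [dist_triangle (u k n) (x k) ξ]⟩
  choose k n hP hdist using hpick
  refine ⟨k, n, hP, tendsto_iff_dist_tendsto_zero.2 ?_⟩
  refine squeeze_zero (fun j => dist_nonneg) (fun j => (hdist j).le) ?_
  simpa using tendsto_one_div_add_atTop_nhds_zero_nat.const_mul (2 : ℝ)

section Realization

variable {X M : Type*} [TopologicalSpace X] [PseudoMetricSpace M] (g : M → X)

def convergentLimits : Set (Completion M) :=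
  {ξ | ∃ v : ℕ → M, Tendsto (fun n => (v n : Completion M)) atTop (𝓝 ξ) ∧
    ∃ a, Tendsto (g ∘ v) atTop (𝓝 a)}

noncomputable def approxSeq (ξ : convergentLimits g) : ℕ → M := ξ.2.choose

noncomputable def limitMap (ξ : convergentLimits g) : X := ξ.2.choose_spec.2.choose

def sectionMap (h : X → M) (x : X) : convergentLimits g :=
  ⟨h x, fun _ => h x, tendsto_const_nhds, g (h x), tendsto_const_nhds⟩

variable {g}

theorem tendsto_approxSeq (ξ : convergentLimits g) :
    Tendsto (fun n => ((approxSeq g ξ n : M) : Completion M)) atTop (𝓝 ξ) :=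
  ξ.2.choose_spec.1

theorem tendsto_comp_approxSeq (ξ : convergentLimits g) :
    Tendsto (g ∘ approxSeq g ξ) atTop (𝓝 (limitMap g ξ)) :=
  ξ.2.choose_spec.2.choose_spec

variable [T2Space X]

theorem tendsto_limitMap (hc : CauchySeqConvergesOfSubseq g) (ξ : convergentLimits g)
    {v : ℕ → M} (hv : Tendsto (fun n => (v n : Completion M)) atTop (𝓝 ξ)) :
    Tendsto (g ∘ v) atTop (𝓝 (limitMap g ξ)) :=
  hc.tendsto_of_coe (tendsto_approxSeq ξ) hv (tendsto_comp_approxSeq ξ)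

theorem leftInverse_limitMap_sectionMap (hc : CauchySeqConvergesOfSubseq g) {h : X → M}
    (hgh : LeftInverse g h) : LeftInverse (limitMap g) (sectionMap g h) := fun x =>
  tendsto_nhds_unique (tendsto_limitMap hc _ tendsto_const_nhds)
    (by simp [comp_def, hgh x])

/-- For `ξₖ → ξ` and `seqClosure V ⊆ U`, eventually the approximating sequence of `ξₖ` meets `V`
infinitely often, so that `limitMap g ξₖ ∈ U`: otherwise a diagonal sequence would approximate
`ξ` while avoiding `V`. -/
theorem continuous_limitMap (hreg : SeqRegular X) (hc : CauchySeqConvergesOfSubseq g) :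
    Continuous (limitMap g) := by
  refine SeqContinuous.continuous fun ξ ξ₀ hξ => tendsto_def.2 fun U hU => ?_
  obtain ⟨V, hV, hVU⟩ := hreg _ U hU
  have hfreq : ∀ᶠ k in atTop, ∃ᶠ n in atTop, g (approxSeq g (ξ k) n) ∈ V := by
    by_contra hcon
    simp only [not_eventually, not_frequently] at hcon
    obtain ⟨k, n, hkn, hlim⟩ := exists_tendsto_diagonal
      (u := fun k n => ((approxSeq g (ξ k) n : M) : Completion M))
      ((continuous_subtype_val.tendsto ξ₀).comp hξ) (fun k => tendsto_approxSeq (ξ k))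
      (hcon.mono fun k hk => hk.frequently)
    obtain ⟨j, hj⟩ := ((tendsto_limitMap hc ξ₀ hlim).eventually_mem hV).exists
    exact hkn j hj
  filter_upwards [hfreq] with k hk
  obtain ⟨ψ, hψ, hψV⟩ := extraction_of_frequently_atTop hk
  exact hVU ⟨_, hψV, (tendsto_comp_approxSeq (ξ k)).comp hψ.tendsto_atTop⟩

theorem isCompact_closure_image_sectionMap {h : X → M} (hg : Continuous g)
    (hgh : LeftInverse g h) {K : Set X} (hK : IsCompact K) (htb : TotallyBounded (h '' K)) :
    IsCompact (closure (sectionMap g h '' K)) := by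
  set C := closure ((fun x => (h x : Completion M)) '' K)
  have hCcompact : IsCompact C := by
    have htb' : TotallyBounded ((fun x => (h x : Completion M)) '' K) := by
      simpa [image_image] using htb.image (Completion.uniformContinuous_coe M)
    exact htb'.closure.isCompact_of_isClosed isClosed_closure
  have hCsub : C ⊆ convergentLimits g := by
    intro ξ hξ
    obtain ⟨c, hcK, hcξ⟩ := mem_closure_iff_seq_limit.1 hξ
    choose x hxK hxc using hcK
    obtain ⟨a, -, φ, hφ, hxa⟩ := hK.isSeqCompact_of_totallyBounded_image hg hgh htb hxK
    refine ⟨h ∘ x ∘ φ, ?_, a, by rwa [← comp_assoc, hgh.comp_eq_id]⟩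
    simpa [comp_def, hxc] using hcξ.comp hφ.tendsto_atTop
  have hpre : IsCompact (Subtype.val ⁻¹' C : Set (convergentLimits g)) :=
    (IsInducing.subtypeVal.isCompact_preimage_iff (by simpa using hCsub)).2 hCcompact
  refine hpre.of_isClosed_subset isClosed_closure (closure_minimal ?_
    (isClosed_closure.preimage continuous_subtype_val))
  rintro _ ⟨x, hx, rfl⟩
  exact subset_closure (mem_image_of_mem _ hx)

end Realization

theorem kStarMetrizable_of_section {X M : Type u} [TopologicalSpace X] [T2Space X]
    [MetricSpace M] (hreg : SeqRegular X) {g : M → X} {h : X → M} (hg : Continuous g)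
    (hgh : LeftInverse g h) (hc : CauchySeqConvergesOfSubseq g)
    (htb : ∀ K, IsCompact K → TotallyBounded (h '' K)) : KStarMetrizable X :=
  have hinv := leftInverse_limitMap_sectionMap hc hgh
  ⟨convergentLimits g, inferInstance, limitMap g, sectionMap g h, continuous_limitMap hreg hc,
    hinv.surjective, hinv, fun _ hK => isCompact_closure_image_sectionMap hg hgh hK (htb _ hK)⟩

section Pullback

variable {X M : Type*} [PseudoMetricSpace M]

theorem exists_finite_cover_of_totallyBounded_image {s : X → M} {K : Set X}
    (hK : TotallyBounded (s '' K)) {ε : ℝ} (hε : 0 < ε) :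
    ∃ F : Set X, F.Finite ∧ K ⊆ ⋃ y ∈ F, {x | dist (s y) (s x) < ε} := by
  obtain ⟨F, -, hF, hcover⟩ :=
    exists_subset_image_finite_and.1 (Metric.finite_approx_of_totallyBounded hK ε hε)
  refine ⟨F, hF, fun x hx => ?_⟩
  obtain ⟨_, ⟨y, hy, rfl⟩, hxy⟩ := mem_iUnion₂.1 (hcover (mem_image_of_mem s hx))
  exact mem_iUnion₂.2 ⟨y, hy, (dist_comm _ _).trans_lt hxy⟩

/-- The subsequence together with its limit is compact, so `s ∘ x` has a cluster point in `M`. -/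
theorem exists_tendsto_of_cauchySeq_comp_section [TopologicalSpace X] {f : M → X} {s : X → M}
    (hf : Continuous f) (hfs : LeftInverse f s)
    (hs : ∀ K, IsCompact K → IsCompact (closure (s '' K)))
    {x : ℕ → X} (hx : CauchySeq (s ∘ x)) {φ : ℕ → ℕ} (hφ : StrictMono φ) {a : X}
    (ha : Tendsto (x ∘ φ) atTop (𝓝 a)) : ∃ b, Tendsto x atTop (𝓝 b) := by
  obtain ⟨c, -, ψ, hψ, hc⟩ := (hs _ ha.isCompact_insert_range).isSeqCompact
    (x := s ∘ x ∘ φ) fun n => subset_closure (mem_image_of_mem s (mem_insert_of_mem _ ⟨n, rfl⟩))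
  have hxc : Tendsto (s ∘ x) atTop (𝓝 c) :=
    tendsto_nhds_of_cauchySeq_of_subseq hx (hφ.comp hψ).tendsto_atTop hc
  exact ⟨f c, by simpa [← comp_assoc, hfs.comp_eq_id] using (hf.tendsto c).comp hxc⟩

end Pullback

/-- A copy of `X` on which a metric can be installed without clashing with the topology of `X`. -/
def WithMetric (X : Type*) : Type _ := X

noncomputable abbrev WithMetric.metricSpace {X : Type*} (ρ : X → X → ℝ)
    (hself : ∀ x, ρ x x = 0) (heq : ∀ x y, ρ x y = 0 → x = y) (hsymm : ∀ x y, ρ x y = ρ y x)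
    (htri : ∀ x y z, ρ x z ≤ ρ x y + ρ y z) : MetricSpace (WithMetric X) where
  dist := ρ
  dist_self := hself
  dist_comm := hsymm
  dist_triangle := htri
  eq_of_dist_eq_zero := heq _ _
  edist_dist _ _ := rfl

/-- A sequentially regular Hausdorff space `X` is k*-metrizable iff there is
a metric `ρ` on `X` such that (a) compact sets are `ρ`-totally bounded; (b) `ρ`-convergent
sequences converge in `X`; (c) a `ρ`-Cauchy sequence converges in `X` iff it has a
subsequence convergent in `X`. -/
theorem stmt_4 {X : Type u} [TopologicalSpace X] [T2Space X] (hreg : SeqRegular X) :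
    KStarMetrizable X ↔
      ∃ ρ : X → X → ℝ,
        (∀ x, ρ x x = 0) ∧
        (∀ x y, ρ x y = 0 → x = y) ∧
        (∀ x y, ρ x y = ρ y x) ∧
        (∀ x y z, ρ x z ≤ ρ x y + ρ y z) ∧
        -- (a) each compact set is totally bounded for ρ
        (∀ K : Set X, IsCompact K → ∀ ε : ℝ, 0 < ε →
          ∃ F : Set X, F.Finite ∧ K ⊆ ⋃ y ∈ F, {x | ρ y x < ε}) ∧
        -- (b) each ρ-convergent sequence converges in X
        (∀ (x : ℕ → X) (a : X),
          Tendsto (fun n => ρ (x n) a) atTop (𝓝 0) → Tendsto x atTop (𝓝 a)) ∧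
        -- (c) a ρ-Cauchy sequence converges in X iff it has a convergent subsequence
        (∀ x : ℕ → X,
          (∀ ε : ℝ, 0 < ε → ∃ N, ∀ m ≥ N, ∀ n ≥ N, ρ (x m) (x n) < ε) →
          ((∃ a, Tendsto x atTop (𝓝 a)) ↔
            ∃ φ : ℕ → ℕ, StrictMono φ ∧ ∃ a, Tendsto (x ∘ φ) atTop (𝓝 a))) := by
  constructor
  · rintro ⟨M, _, f, s, hf, -, hfs, hs⟩
    refine ⟨fun x y => dist (s x) (s y), fun _ => dist_self _,
      fun _ _ hxy => LeftInverse.injective hfs (dist_eq_zero.1 hxy), fun _ _ => dist_comm _ _,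
      fun _ _ _ => dist_triangle _ _ _, fun K hK _ hε =>
        exists_finite_cover_of_totallyBounded_image
          ((hs K hK).totallyBounded.subset subset_closure) hε,
      fun x a hxa => ?_, fun x hx => ⟨fun ⟨a, ha⟩ => ⟨id, strictMono_id, a, ha⟩,
        fun ⟨φ, hφ, a, ha⟩ =>
          exists_tendsto_of_cauchySeq_comp_section hf hfs hs (Metric.cauchySeq_iff.2 hx) hφ ha⟩⟩
    simpa only [comp_def, hfs] using
      (hf.tendsto _).comp (tendsto_iff_dist_tendsto_zero.2 hxa)
  · rintro ⟨ρ, hself, heq, hsymm, htri, hcover, hconv, hcauchy⟩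
    let := WithMetric.metricSpace ρ hself heq hsymm htri
    refine kStarMetrizable_of_section (M := WithMetric X) (g := id) (h := id) hreg
      (SeqContinuous.continuous fun x a hxa => hconv x a (tendsto_iff_dist_tendsto_zero.1 hxa))
      (fun _ => rfl)
      (fun x hx φ hφ a ha => (hcauchy x (Metric.cauchySeq_iff.1 hx)).2 ⟨φ, hφ, a, ha⟩)
      fun K hK => Metric.totallyBounded_iff.2 fun ε hε => ?_
    obtain ⟨F, hF, hKF⟩ := hcover K hK ε hε
    refine ⟨F, hF, ?_⟩
    rintro _ ⟨x, hx, rfl⟩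
    obtain ⟨y, hy, hyx⟩ := mem_iUnion₂.1 (hKF hx)
    exact mem_iUnion₂.2 ⟨y, hy, (hsymm x y).trans_lt hyx⟩
end

section
/- Let f : X → Y be a continuous closed surjection from a Hausdorff space X onto a Hausdorff space Y. If X is a k*-metrizable k-space, then Y is k*-metrizable. -/
/-!
Let `g : M → X` with section `s` witness that `X` is k*-metrizable, and let `t` be a section of
`f`. Then `f ∘ g` with section `s ∘ t` works for `Y`, once we know that `s ∘ t` sends a compact
`K ⊆ Y` to a precompact set. Given `y n ∈ K`, some compact `C ⊆ X` contains `t (y n)` for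
infinitely many `n`, and then `s (t (y n))` has a convergent subsequence in the compact
`closure (s '' C)`. Otherwise every compact set meets `range (t ∘ y)` in a finite set, so in the
k-space `X` every subset of this range is closed; the closed map `f` carries them onto all
subsets of `range y ⊆ K`, which is then finite, since a compact set all of whose subsets are
closed is finite. But then `range (t ∘ y)` is itself a finite compact set containing every term.
Finally `M` is cut down to the closure of the range of the section, which injects into `ℕ → Y`
and hence lives in the universe of `Y`.
-/

open Filter Topology Set

universe u v

/-- A space `X` is a k-space if every set whose trace on each compact subset is closed
(in the subspace topology of that compact) is closed. -/
def IsKSpace (X : Type u) [TopologicalSpace X] : Prop :=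
  ∀ F : Set X,
    (∀ K : Set X, IsCompact K → IsClosed {k : K | (k : X) ∈ F}) → IsClosed F

theorem Metric.isCompact_closure_of_forall_exists_tendsto_subseq {M : Type*} [PseudoMetricSpace M]
    {A : Set M} (hA : ∀ u : ℕ → M, (∀ n, u n ∈ A) →
      ∃ a, ∃ φ : ℕ → ℕ, StrictMono φ ∧ Tendsto (u ∘ φ) atTop (𝓝 a)) :
    IsCompact (closure A) := by
  refine IsSeqCompact.isCompact fun u hu => ?_
  have happrox (n : ℕ) : ∃ b ∈ A, dist (u n) b < 1 / (n + 1) :=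
    Metric.mem_closure_iff.1 (hu n) _ (by positivity)
  choose v hvA hvu using happrox
  obtain ⟨a, φ, hφ, hlim⟩ := hA v hvA
  refine ⟨a, mem_closure_of_tendsto hlim (.of_forall fun n => hvA _), φ, hφ, hlim.congr_dist ?_⟩
  refine squeeze_zero (fun _ => dist_nonneg) (fun n => ?_) tendsto_one_div_add_atTop_nhds_zero_nat
  calc dist (v (φ n)) (u (φ n)) ≤ 1 / (φ n + 1) := by rw [dist_comm]; exact (hvu _).le
    _ ≤ 1 / (n + 1) := by gcongr; exact_mod_cast hφ.le_apply

section

variable {X Y : Type*} [TopologicalSpace X] [TopologicalSpace Y]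

theorem IsKSpace.isClosed_of_finite_inter_isCompact [T1Space X] (hk : IsKSpace X) {R : Set X}
    (hR : ∀ C, IsCompact C → (R ∩ C).Finite) : IsClosed R :=
  hk R fun C hC => by
    have htrace : {k : C | (k : X) ∈ R} = Subtype.val ⁻¹' (R ∩ C) := by ext k; simp
    exact htrace ▸ ((hR C hC).preimage Subtype.val_injective.injOn).isClosed

theorem IsCompact.finite_of_forall_subset_isClosed {S : Set Y} (hS : IsCompact S)
    (h : ∀ E ⊆ S, IsClosed E) : S.Finite := by
  by_contra hinf
  obtain ⟨y, -, hy⟩ := Set.Infinite.exists_accPt_of_subset_isCompact hinf hS subset_rfl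
  have hy' : y ∈ closure (S \ {y}) :=
    mem_closure_iff_frequently.2 (accPt_iff_frequently.1 hy |>.mono fun z ⟨hzy, hzS⟩ => ⟨hzS, hzy⟩)
  rw [(h _ sdiff_subset).closure_eq] at hy'
  exact hy'.2 rfl

theorem IsKSpace.exists_isCompact_frequently_mem [T1Space X] (hk : IsKSpace X) {f : X → Y}
    (hf : IsClosedMap f) {K : Set Y} (hK : IsCompact K) {x : ℕ → X} (hxK : ∀ n, f (x n) ∈ K)
    (hinj : InjOn f (range x)) : ∃ C, IsCompact C ∧ ∃ᶠ n in atTop, x n ∈ C := by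
  simp only [Nat.frequently_atTop_iff_infinite]
  by_contra! hrare
  have hfin (C : Set X) (hC : IsCompact C) : (range x ∩ C).Finite :=
    image_preimage_eq_range_inter ▸ (hrare C hC).image x
  have hsub_closed (E : Set X) (hE : E ⊆ range x) : IsClosed E :=
    hk.isClosed_of_finite_inter_isCompact fun C hC =>
      (hfin C hC).subset (inter_subset_inter_left C hE)
  have himage_closed (E : Set Y) (hE : E ⊆ f '' range x) : IsClosed E := by
    rw [← inter_eq_right.2 hE, ← image_inter_preimage]
    exact hf _ (hsub_closed _ inter_subset_left)
  have hrange : (range x).Finite := by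
    refine Finite.of_finite_image ?_ hinj
    refine (hK.of_isClosed_subset (himage_closed _ subset_rfl) ?_).finite_of_forall_subset_isClosed
      fun E hE => himage_closed E hE
    rintro _ ⟨_, ⟨n, rfl⟩, rfl⟩
    exact hxK n
  exact infinite_univ (by simpa using hrare _ hrange.isCompact)

theorem IsKSpace.isCompact_closure_image_comp [T1Space X] {M : Type*} [PseudoMetricSpace M]
    (hk : IsKSpace X) {s : X → M}
    (hs : ∀ C, IsCompact C → IsCompact (closure (s '' C))) {f : X → Y} (hf : IsClosedMap f)
    {t : Y → X} (ht : Function.LeftInverse f t) {K : Set Y} (hK : IsCompact K) :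
    IsCompact (closure ((s ∘ t) '' K)) := by
  refine Metric.isCompact_closure_of_forall_exists_tendsto_subseq fun u hu => ?_
  choose y hyK hyu using hu
  obtain rfl : s ∘ t ∘ y = u := funext hyu
  obtain ⟨C, hC, hfreq⟩ := hk.exists_isCompact_frequently_mem hf hK (x := t ∘ y)
    (fun n => by simpa [ht (y n)] using hyK n)
    ((ht.comp_eq_id ▸ Function.injective_id).injOn_range.mono (range_comp_subset_range y t))
  obtain ⟨a, -, φ, hφ, hlim⟩ := (hs C hC).isSeqCompact.subseq_of_frequently_in
    (hfreq.mono fun n hn => subset_closure (mem_image_of_mem s hn))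
  exact ⟨a, φ, hφ, hlim⟩

end

theorem small_closure {M : Type*} [TopologicalSpace M] [FrechetUrysohnSpace M] [T2Space M]
    (A : Set M) [Small.{u} A] : Small.{u} (closure A) := by
  have hseq (m : closure A) : ∃ σ : ℕ → A, Tendsto (fun n => (σ n : M)) atTop (𝓝 m) := by
    obtain ⟨σ, hσA, hσ⟩ := mem_closure_iff_seq_limit.1 m.2
    exact ⟨fun n => ⟨σ n, hσA n⟩, hσ⟩
  choose σ hσ using hseq
  exact small_of_injective (f := σ) fun m m' h =>
    Subtype.ext <| tendsto_nhds_unique (hσ m) (by rw [h]; exact hσ m')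

theorem KStarMetrizable.of_leftInverse {X : Type u} [TopologicalSpace X] {M : Type*}
    [TopologicalSpace M] [TopologicalSpace.MetrizableSpace M]
    {g : M → X} {s : X → M} (hg : Continuous g) (hgs : Function.LeftInverse g s)
    (hs : ∀ K, IsCompact K → IsCompact (closure (s '' K))) : KStarMetrizable X := by
  set N := closure (range s)
  have : Small.{u} N := small_closure (range s)
  let h : Shrink.{u} N ≃ₜ N := (Shrink.homeomorph N).symm
  let ι : Shrink.{u} N → M := fun z => (h z : M)
  have hι : IsClosedEmbedding ι :=
    isClosed_closure.isClosedEmbedding_subtypeVal.comp h.isClosedEmbedding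
  have : TopologicalSpace.MetrizableSpace (Shrink.{u} N) := hι.isEmbedding.metrizableSpace
  let s' : X → Shrink.{u} N := fun x => h.symm ⟨s x, subset_closure (mem_range_self x)⟩
  have hιs : ι ∘ s' = s := funext fun x => by simp [ι, s']
  have hsec : Function.LeftInverse (g ∘ ι) s' := fun x => by simp [ι, s', hgs x]
  refine ⟨Shrink.{u} N, TopologicalSpace.metrizableSpaceMetric _, g ∘ ι, s', hg.comp hι.continuous,
    hsec.surjective, hsec, fun K hK => ?_⟩
  rw [hι.isInducing.isCompact_iff, ← hι.closure_image_eq, image_image]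
  simpa [← hιs] using hs K hK

theorem stmt_5_general {X : Type u} {Y : Type v} [TopologicalSpace X] [TopologicalSpace Y]
    [T2Space X]
    (hX : KStarMetrizable X) (hk : IsKSpace X)
    (f : X → Y) (hf : Continuous f) (hclosed : IsClosedMap f)
    (hsurj : Function.Surjective f) :
    KStarMetrizable Y := by
  obtain ⟨M, _, g, s, hg, -, hgs, hs⟩ := hX
  obtain ⟨t, ht⟩ := hsurj.hasRightInverse
  exact KStarMetrizable.of_leftInverse (hf.comp hg) (fun y => by simp [hgs (t y), ht y])
    fun K hK => hk.isCompact_closure_image_comp hs hclosed ht hK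

/-- The image of a k*-metrizable k-space under a continuous closed
surjection is k*-metrizable. -/
theorem stmt_5 {X : Type u} {Y : Type v} [TopologicalSpace X] [TopologicalSpace Y]
    [T2Space X] [T2Space Y]
    (hX : KStarMetrizable X) (hk : IsKSpace X)
    (f : X → Y) (hf : Continuous f) (hclosed : IsClosedMap f)
    (hsurj : Function.Surjective f) :
    KStarMetrizable Y :=
  stmt_5_general hX hk f hf hclosed hsurj
end

section
/- A Hausdorff topological space X is k*-metrizable if and only if there is a countable family (X_n)_{n∈ℕ} of subsets of X such that each X_n is k-closed in X, each X_n is k*-metrizable in the subspace topology, and for every sequence (x_k) in X converging to a point x ∈ X there is an n with {x_k : k ∈ ℕ} ∪ {x} ⊆ X_n. -/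
open Filter Topology Set

universe u

/-- A subset `A ⊆ X` is k-closed if its trace on every compact set `K` is closed in `K`. -/
def KClosed {X : Type u} [TopologicalSpace X] (A : Set X) : Prop :=
  ∀ K : Set X, IsCompact K → IsClosed {k : K | (k : X) ∈ A}

/-!
Given such a family, the disjoint sum of metric spaces witnessing k*-metrizability of the
`A n` witnesses it for `X`, with the section sending `x` into the summand of the first `A n`
containing it. This section maps a compact `K` into a relatively compact set because `K` lies
in finitely many `A n`: otherwise pick `y N ∈ K` outside `A 0, …, A (N - 1)`. The compact set
`K` is covered by the countably many compact traces `K ∩ A n`, each second countable, so it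
has a countable network and, being compact Hausdorff, is second countable. A subsequence of
`y` therefore converges, and that subsequence lies in a single `A n`, which is absurd.
-/

open TopologicalSpace

def IsNetwork {C : Type*} [TopologicalSpace C] (N : Set (Set C)) : Prop :=
  ∀ x U, IsOpen U → x ∈ U → ∃ M ∈ N, x ∈ M ∧ M ⊆ U

/-- A compact Hausdorff space with a countable network embeds into a countable power of `ℝ`:
use one Urysohn function for each pair of network members with disjoint closures. -/
theorem IsNetwork.secondCountableTopology {C : Type*} [TopologicalSpace C] [CompactSpace C]
    [T2Space C] {N : Set (Set C)} (hN : IsNetwork N) (hcount : N.Countable) :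
    SecondCountableTopology C := by
  have hurysohn : ∀ p : ↥(N ×ˢ N), ∃ g : C → ℝ, Continuous g ∧
      (Disjoint (closure p.1.1) (closure p.1.2) →
        EqOn g 0 (closure p.1.1) ∧ EqOn g 1 (closure p.1.2)) := by
    intro p
    by_cases hp : Disjoint (closure p.1.1) (closure p.1.2)
    · obtain ⟨g, hg0, hg1, -⟩ :=
        exists_continuous_zero_one_of_isClosed isClosed_closure isClosed_closure hp
      exact ⟨g, g.continuous, fun _ => ⟨hg0, hg1⟩⟩
    · exact ⟨0, continuous_const, fun h => absurd h hp⟩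
  choose g hg_cont hg_sep using hurysohn
  have : Countable ↥(N ×ˢ N) := (hcount.prod hcount).to_subtype
  have hinj : Function.Injective fun x p => g p x := by
    intro x y hxy
    by_contra hne
    obtain ⟨U, hxU, hU, V, hyV, hV, hUV⟩ := exists_open_nhds_disjoint_closure hne
    obtain ⟨M₁, hM₁, hxM₁, hM₁U⟩ := hN x U hU hxU
    obtain ⟨M₂, hM₂, hyM₂, hM₂V⟩ := hN y V hV hyV
    have hdisj := hUV.mono (closure_mono hM₁U) (closure_mono hM₂V)
    obtain ⟨h0, h1⟩ := hg_sep ⟨(M₁, M₂), hM₁, hM₂⟩ hdisj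
    have := congrFun hxy ⟨(M₁, M₂), hM₁, hM₂⟩
    simp only [h0 (subset_closure hxM₁), h1 (subset_closure hyM₂)] at this
    exact zero_ne_one (α := ℝ) this
  exact ((continuous_pi hg_cont).isClosedEmbedding hinj).isEmbedding.secondCountableTopology

theorem secondCountableTopology_of_continuous_jointlySurjective {C : Type*} [TopologicalSpace C]
    [CompactSpace C] [T2Space C] {ι : Type*} [Countable ι] {Y : ι → Type*}
    [∀ i, TopologicalSpace (Y i)] [∀ i, SecondCountableTopology (Y i)] (f : ∀ i, Y i → C)
    (hf : ∀ i, Continuous (f i)) (hcover : ∀ x, ∃ i y, f i y = x) :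
    SecondCountableTopology C := by
  refine IsNetwork.secondCountableTopology (N := ⋃ i, (f i '' ·) '' countableBasis (Y i)) ?_
    (countable_iUnion fun i => (countable_countableBasis _).image _)
  intro x U hU hxU
  obtain ⟨i, y, rfl⟩ := hcover x
  obtain ⟨B, hB, hyB, hBU⟩ := (isBasis_countableBasis (Y i)).exists_subset_of_mem_open
    (show y ∈ f i ⁻¹' U from hxU) (hU.preimage (hf i))
  exact ⟨f i '' B, mem_iUnion.2 ⟨i, mem_image_of_mem _ hB⟩, mem_image_of_mem _ hyB,
    image_subset_iff.2 hBU⟩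

theorem KStarMetrizable.of_homeomorph {X Y : Type u} [TopologicalSpace X] [TopologicalSpace Y]
    (h : KStarMetrizable X) (e : X ≃ₜ Y) : KStarMetrizable Y := by
  obtain ⟨M, _, f, s, hf, hsurj, hfs, hs⟩ := h
  refine ⟨M, inferInstance, e ∘ f, s ∘ e.symm, e.continuous.comp hf,
    e.surjective.comp hsurj, fun y => by simp [hfs], fun K hK => ?_⟩
  rw [image_comp]
  exact hs _ (hK.image e.symm.continuous)

theorem KStarMetrizable.secondCountableTopology_of_isCompact {Y : Type u} [TopologicalSpace Y]
    [T2Space Y] (h : KStarMetrizable Y) {K : Set Y} (hK : IsCompact K) :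
    SecondCountableTopology K := by
  obtain ⟨M, _, f, s, hf, -, hfs, hs⟩ := h
  set Q := closure (s '' K)
  have : CompactSpace Q := isCompact_iff_compactSpace.mp (hs K hK)
  have : CompactSpace (f '' Q) := isCompact_iff_compactSpace.mp ((hs K hK).image hf)
  have : SecondCountableTopology (f '' Q) :=
    secondCountableTopology_of_continuous_jointlySurjective (ι := Unit)
      (fun _ (q : Q) => (⟨f q, mem_image_of_mem f q.2⟩ : f '' Q))
      (fun _ => (hf.comp continuous_subtype_val).subtype_mk _)
      (by rintro ⟨-, q, hq, rfl⟩; exact ⟨(), ⟨q, hq⟩, rfl⟩)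
  have hKQ : K ⊆ f '' Q := fun x hx => ⟨s x, subset_closure (mem_image_of_mem s hx), hfs x⟩
  exact (IsEmbedding.inclusion hKQ).secondCountableTopology

theorem KClosed.isCompact_preimage_val {X : Type u} [TopologicalSpace X] {A K : Set X}
    (hA : KClosed A) (hK : IsCompact K) : IsCompact (Subtype.val ⁻¹' K : Set A) := by
  have : CompactSpace K := isCompact_iff_compactSpace.mp hK
  rw [IsEmbedding.subtypeVal.isCompact_iff, Subtype.image_preimage_coe, inter_comm,
    ← Subtype.image_preimage_coe]
  exact (hA K hK).isCompact.image continuous_subtype_val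

theorem IsCompact.secondCountableTopology_of_kClosed_cover {X : Type u} [TopologicalSpace X]
    [T2Space X] {ι : Type*} [Countable ι] {A : ι → Set X} (hcl : ∀ i, KClosed (A i))
    (hk : ∀ i, KStarMetrizable (A i)) (hcover : ∀ x, ∃ i, x ∈ A i) {K : Set X}
    (hK : IsCompact K) : SecondCountableTopology K := by
  have : CompactSpace K := isCompact_iff_compactSpace.mp hK
  have (i : ι) : SecondCountableTopology (Subtype.val ⁻¹' K : Set (A i)) :=
    (hk i).secondCountableTopology_of_isCompact ((hcl i).isCompact_preimage_val hK)
  refine secondCountableTopology_of_continuous_jointlySurjective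
    (fun i (y : (Subtype.val ⁻¹' K : Set (A i))) => (⟨y.1.1, y.2⟩ : K))
    (fun i => (continuous_subtype_val.comp continuous_subtype_val).subtype_mk _) ?_
  intro x
  obtain ⟨i, hi⟩ := hcover x
  exact ⟨i, ⟨⟨x, hi⟩, x.2⟩, rfl⟩

theorem exists_mem_of_forall_tendsto {X : Type*} [TopologicalSpace X] {ι : Type*}
    {A : ι → Set X}
    (hseq : ∀ (x : ℕ → X) (a : X), Tendsto x atTop (𝓝 a) → ∃ i, range x ∪ {a} ⊆ A i)
    (x : X) : ∃ i, x ∈ A i :=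
  (hseq _ x tendsto_const_nhds).imp fun _ hi => hi (mem_union_right _ rfl)

theorem IsCompact.exists_subset_biUnion_lt_of_kClosed {X : Type u} [TopologicalSpace X]
    [T2Space X] {A : ℕ → Set X} (hcl : ∀ n, KClosed (A n)) (hk : ∀ n, KStarMetrizable (A n))
    (hseq : ∀ (x : ℕ → X) (a : X), Tendsto x atTop (𝓝 a) → ∃ n, range x ∪ {a} ⊆ A n)
    {K : Set X} (hK : IsCompact K) : ∃ N, K ⊆ ⋃ n < N, A n := by
  have : SecondCountableTopology K :=
    hK.secondCountableTopology_of_kClosed_cover hcl hk (exists_mem_of_forall_tendsto hseq)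
  have : CompactSpace K := isCompact_iff_compactSpace.mp hK
  by_contra! hnot
  choose y hyK hyA using fun N => not_subset.mp (hnot N)
  obtain ⟨a, φ, hφ, hlim⟩ := CompactSpace.tendsto_subseq fun N => (⟨y N, hyK N⟩ : K)
  obtain ⟨n, hn⟩ := hseq _ _ ((continuous_subtype_val.tendsto a).comp hlim)
  -- `y (φ (n + 1))` lies in `A n` although it avoids every `A m` with `m < φ (n + 1)`
  exact hyA (φ (n + 1)) (mem_iUnion₂.2 ⟨n, (Nat.lt_succ_self n).trans_le hφ.le_apply,
    hn (mem_union_left _ ⟨n + 1, rfl⟩)⟩)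

theorem KStarMetrizable.of_kClosed_cover {X : Type u} [TopologicalSpace X] {A : ℕ → Set X}
    (hcl : ∀ n, KClosed (A n)) (hk : ∀ n, KStarMetrizable (A n)) (hcover : ∀ x, ∃ n, x ∈ A n)
    (hfin : ∀ K, IsCompact K → ∃ N, K ⊆ ⋃ n < N, A n) : KStarMetrizable X := by
  classical
  choose M _ f s hf hsurj hfs hs using hk
  let idx (x : X) : ℕ := Nat.find (hcover x)
  refine ⟨Σ n, M n, Metric.Sigma.metricSpace, fun m => f m.1 m.2,
    fun x => ⟨idx x, s _ ⟨x, Nat.find_spec (hcover x)⟩⟩,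
    continuous_sigma fun n => continuous_subtype_val.comp (hf n), fun x => ?_,
    fun x => by simp [hfs], fun K hK => ?_⟩
  · obtain ⟨n, hn⟩ := hcover x
    obtain ⟨m, hm⟩ := hsurj n ⟨x, hn⟩
    exact ⟨⟨n, m⟩, by simp [hm]⟩
  · obtain ⟨N, hN⟩ := hfin K hK
    refine IsCompact.closure_of_subset
      (K := ⋃ n < N, Sigma.mk n '' closure (s n '' (Subtype.val ⁻¹' K)))
      ((finite_Iio N).isCompact_biUnion fun n _ =>
        (hs n _ ((hcl n).isCompact_preimage_val hK)).image continuous_sigmaMk) ?_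
    rintro - ⟨x, hx, rfl⟩
    obtain ⟨n, hnN, hxn⟩ := mem_iUnion₂.1 (hN hx)
    exact mem_iUnion₂.2 ⟨idx x, (Nat.find_min' _ hxn).trans_lt hnN,
      mem_image_of_mem _ (subset_closure (mem_image_of_mem _ hx))⟩

/-- A Hausdorff space `X` is k*-metrizable iff there is a countable family
`(A n)` of k-closed subsets, each k*-metrizable in the subspace topology, such that
every convergent sequence together with its limit lies in some `A n`. -/
theorem stmt_6 {X : Type u} [TopologicalSpace X] [T2Space X] :
    KStarMetrizable X ↔
      ∃ A : ℕ → Set X,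
        (∀ n, KClosed (A n)) ∧
        (∀ n, KStarMetrizable ↥(A n)) ∧
        (∀ (x : ℕ → X) (a : X), Tendsto x atTop (𝓝 a) →
          ∃ n, Set.range x ∪ {a} ⊆ A n) := by
  constructor
  · intro h
    exact ⟨fun _ => univ, fun _ K _ => by simp,
      fun _ => h.of_homeomorph (Homeomorph.Set.univ X).symm, fun _ _ _ => ⟨0, subset_univ _⟩⟩
  · rintro ⟨A, hcl, hk, hseq⟩
    exact KStarMetrizable.of_kClosed_cover hcl hk (exists_mem_of_forall_tendsto hseq)
      fun K hK => hK.exists_subset_biUnion_lt_of_kClosed hcl hk hseq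
end

section
/- For a Hausdorff topological space X the following conditions are equivalent: (1) X is metrizable; (2) X is a sequential space and X is cs-metrizable; (3) X is a k-space and X is k-metrizable. -/
open Filter Topology Set

universe u

/-- A Hausdorff space `X` is cs-metrizable if it is the image of a metrizable space
under a continuous surjection admitting a sequentially continuous section. -/
def CsMetrizable (X : Type u) [TopologicalSpace X] : Prop :=
  ∃ (M : Type u) (_ : MetricSpace M) (f : M → X) (s : X → M),
    Continuous f ∧ Function.Surjective f ∧ (∀ x, f (s x) = x) ∧
    ∀ (x : ℕ → X) (a : X), Tendsto x atTop (𝓝 a) →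
      ∃ m : M, Tendsto (fun n => s (x n)) atTop (𝓝 m)

/-- A Hausdorff space `X` is k-metrizable if it is the image of a metrizable space
under a continuous surjection for which preimages of compact sets are compact. -/
def KMetrizable (X : Type u) [TopologicalSpace X] : Prop :=
  ∃ (M : Type u) (_ : MetricSpace M) (f : M → X),
    Continuous f ∧ Function.Surjective f ∧
    ∀ K : Set X, IsCompact K → IsCompact (f ⁻¹' K)

/-! (1) ⇒ (2), (3): take `M = X` and the identity; metrizable spaces are sequential, hence k-spaces.

(2) ⇒ (1): a section sending convergent sequences to convergent sequences is sequentially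
continuous, hence continuous on a sequential space, so it embeds `X` into `M`.

(3) ⇒ (1): over a Hausdorff k-space, `f` is proper. Pushing forward a locally finite closed
refinement from `M` and applying Michael's lemma shows that `X` is paracompact. The covers of `X`
by the sets `{y | f ⁻¹' {y} ⊆ thickening (1 / (k + 1)) (f ⁻¹' {x})}` form a development, and in a
paracompact Hausdorff space a development can be replaced by a sequence of open covers each of
which star-refines the previous one; the induced countably generated uniformity gives a metric. -/

open Metric

universe v

section CoverStar

variable {ι X : Type*}

def coverStar (A : ι → Set X) (s : Set X) : Set X :=
  ⋃ (i) (_ : (A i ∩ s).Nonempty), A i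

variable {A : ι → Set X} {s t : Set X} {x z : X}

theorem mem_coverStar : z ∈ coverStar A s ↔ ∃ i, (A i ∩ s).Nonempty ∧ z ∈ A i := by
  simp [coverStar]

theorem mem_coverStar_singleton : z ∈ coverStar A {x} ↔ ∃ i, x ∈ A i ∧ z ∈ A i := by
  simp only [mem_coverStar, inter_singleton_nonempty]

theorem subset_coverStar {i : ι} (h : (A i ∩ s).Nonempty) : A i ⊆ coverStar A s :=
  fun _ hz => mem_coverStar.2 ⟨i, h, hz⟩

theorem coverStar_mono (h : s ⊆ t) : coverStar A s ⊆ coverStar A t := fun _ hz =>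
  let ⟨i, hi, hz⟩ := mem_coverStar.1 hz
  mem_coverStar.2 ⟨i, hi.mono (inter_subset_inter_right _ h), hz⟩

end CoverStar

section StarRefinement

variable {Y ι : Type*} [TopologicalSpace Y] [NormalSpace Y] [ParacompactSpace Y] {C : ι → Set Y}

theorem exists_barycentric_refinement (hCo : ∀ i, IsOpen (C i)) (hCc : ⋃ i, C i = univ) :
    ∃ A : Y → Set Y, (∀ x, IsOpen (A x) ∧ x ∈ A x) ∧ ∀ x, ∃ i, coverStar A {x} ⊆ C i := by
  obtain ⟨V, hVo, hVc, hVlf, hVC⟩ := precise_refinement C hCo hCc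
  obtain ⟨v, hvc, -, hvV⟩ := exists_iUnion_eq_closure_subset hVo hVlf.point_finite hVc
  refine ⟨fun x => (⋂ i ∈ {i | x ∈ V i}, V i) \ ⋃ i ∈ {i | x ∉ V i}, closure (v i),
    fun x => ⟨?_, ?_⟩, fun x => ?_⟩
  · refine ((hVlf.point_finite x).isOpen_biInter fun i _ => hVo i).sdiff ?_
    exact (hVlf.subset fun i => iUnion_subset fun _ => hvV i).isClosed_iUnion
      fun i => isClosed_iUnion_of_finite fun _ => isClosed_closure
  · simp only [Set.mem_sdiff, mem_iInter₂, mem_iUnion₂, mem_ofPred_eq, not_exists]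
    exact ⟨fun i hi => hi, fun i hi hx => hi (hvV i hx)⟩
  -- If `x ∈ v i`, every `A y` containing `x` lies in `V i`: when `y ∉ V i`, `A y` avoids
  -- `closure (v i)`.
  obtain ⟨i, hi⟩ := iUnion_eq_univ_iff.1 hvc x
  refine ⟨i, fun z hz => ?_⟩
  obtain ⟨y, hxy, hzy⟩ := mem_coverStar_singleton.1 hz
  by_cases hy : y ∈ V i
  · exact hVC i (mem_iInter₂.1 hzy.1 i hy)
  · exact absurd (mem_iUnion₂.2 ⟨i, hy, subset_closure hi⟩) hxy.2

theorem exists_star_refinement (hCo : ∀ i, IsOpen (C i)) (hCc : ⋃ i, C i = univ) :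
    ∃ A : Y → Set Y, (∀ x, IsOpen (A x) ∧ x ∈ A x) ∧ ∀ x, ∃ i, coverStar A (A x) ⊆ C i := by
  obtain ⟨B, hB, hBC⟩ := exists_barycentric_refinement hCo hCc
  obtain ⟨A, hA, hAB⟩ := exists_barycentric_refinement (fun x => (hB x).1)
    (iUnion_eq_univ_iff.2 fun x => ⟨x, (hB x).2⟩)
  refine ⟨A, hA, fun x => ?_⟩
  obtain ⟨i, hi⟩ := hBC x
  refine ⟨i, fun z hz => hi ?_⟩
  obtain ⟨y, ⟨w, hwy, hwx⟩, hzy⟩ := mem_coverStar.1 hz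
  -- `A x` and `A y` both contain `w`, so both lie in a single `B j`.
  obtain ⟨j, hj⟩ := hAB w
  exact mem_coverStar_singleton.2 ⟨j, hj (mem_coverStar_singleton.2 ⟨x, hwx, (hA x).2⟩),
    hj (mem_coverStar_singleton.2 ⟨y, hwy, hzy⟩)⟩

theorem exists_seq_star_refinement (U : ℕ → ι → Set Y) (hUo : ∀ k i, IsOpen (U k i))
    (hUc : ∀ k, ⋃ i, U k i = univ) :
    ∃ W : ℕ → Y → Set Y, (∀ k x, IsOpen (W k x) ∧ x ∈ W k x) ∧
      (∀ k x, ∃ y, coverStar (W (k + 1)) (W (k + 1) x) ⊆ W k y) ∧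
      ∀ k x, ∃ i, coverStar (W k) (W k x) ⊆ U k i := by
  let Nbhds := {A : Y → Set Y // ∀ x, IsOpen (A x) ∧ x ∈ A x}
  have step : ∀ (k : ℕ) (P : Nbhds), ∃ A : Nbhds,
      ∀ x, ∃ p : Y × ι, coverStar A.1 (A.1 x) ⊆ P.1 p.1 ∩ U (k + 1) p.2 := by
    intro k P
    obtain ⟨A, hA, hAP⟩ :=
      exists_star_refinement (C := fun p : Y × ι => P.1 p.1 ∩ U (k + 1) p.2)
        (fun p => (P.2 p.1).1.inter (hUo _ p.2)) <| iUnion_eq_univ_iff.2 fun x =>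
          let ⟨i, hi⟩ := iUnion_eq_univ_iff.1 (hUc (k + 1)) x
          ⟨(x, i), (P.2 x).2, hi⟩
    exact ⟨⟨A, hA⟩, hAP⟩
  choose next hnext using step
  obtain ⟨A₀, hA₀, hA₀U⟩ := exists_star_refinement (hUo 0) (hUc 0)
  let W : ℕ → Nbhds := fun k => Nat.rec (motive := fun _ => Nbhds) ⟨A₀, hA₀⟩ next k
  refine ⟨fun k => (W k).1, fun k => (W k).2, fun k x => ?_, ?_⟩
  · obtain ⟨p, hp⟩ := hnext k (W k) x
    exact ⟨p.1, hp.trans inter_subset_left⟩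
  · rintro (_ | k) x
    · exact hA₀U x
    · obtain ⟨p, hp⟩ := hnext k (W k) x
      exact ⟨p.2, hp.trans inter_subset_right⟩

end StarRefinement

section Metrization

variable {Y : Type*} [TopologicalSpace Y]

theorem metrizableSpace_of_star_refining [T0Space Y] (W : ℕ → Y → Set Y)
    (hW : ∀ k x, W k x ∈ 𝓝 x) (hstar : ∀ k x, ∃ y, coverStar (W (k + 1)) (W (k + 1) x) ⊆ W k y)
    (hdev : ∀ x, ∀ O ∈ 𝓝 x, ∃ k, coverStar (W k) {x} ⊆ O) :
    TopologicalSpace.MetrizableSpace Y := by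
  set E : ℕ → SetRel Y Y := fun k => ⋃ x, W k x ×ˢ W k x
  have mem_E : ∀ {k a b}, (a, b) ∈ E k ↔ ∃ x, a ∈ W k x ∧ b ∈ W k x := by simp [E]
  have ball_E : ∀ k a, Prod.mk a ⁻¹' E k = coverStar (W k) {a} := fun k a => by
    ext b; simp only [mem_preimage, mem_E, mem_coverStar_singleton]
  have comp_E : ∀ k, SetRel.comp (E (k + 1)) (E (k + 1)) ⊆ E k := by
    rintro k ⟨a, c⟩ ⟨b, hab, hbc⟩
    obtain ⟨x, hax, hbx⟩ := mem_E.1 hab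
    obtain ⟨y, hby, hcy⟩ := mem_E.1 hbc
    obtain ⟨z, hz⟩ := hstar k x
    exact mem_E.2 ⟨z, hz (subset_coverStar ⟨b, hbx, hbx⟩ hax),
      hz (subset_coverStar ⟨b, hby, hbx⟩ hcy)⟩
  let core : UniformSpace.Core Y :=
    { uniformity := ⨅ k, 𝓟 (E k)
      refl := le_iInf fun k => principal_mono.2 <| by
        rintro ⟨a, b⟩ (rfl : a = b)
        exact mem_E.2 ⟨a, mem_of_mem_nhds (hW k a), mem_of_mem_nhds (hW k a)⟩
      symm := tendsto_iInf.2 fun k => tendsto_iInf' k <| tendsto_principal_principal.2 <| by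
        rintro ⟨a, b⟩ hab
        obtain ⟨x, ha, hb⟩ := mem_E.1 hab
        exact mem_E.2 ⟨x, hb, ha⟩
      comp := le_iInf fun k => le_principal_iff.2 <| mem_of_superset
        (mem_lift' (mem_iInf_of_mem (k + 1) (mem_principal_self _))) (comp_E k) }
  have nhds_eq : ∀ a, 𝓝 a = comap (Prod.mk a) core.uniformity := fun a => by
    simp only [core, comap_iInf, comap_principal, ball_E]
    refine le_antisymm (le_iInf fun k => le_principal_iff.2 ?_) fun O hO => ?_
    · exact mem_of_superset (hW k a)
        (subset_coverStar (inter_singleton_nonempty.2 (mem_of_mem_nhds (hW k a))))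
    · obtain ⟨k, hk⟩ := hdev a O hO
      exact mem_iInf_of_mem k (mem_principal.2 hk)
  let _ : UniformSpace Y := .ofCoreEq core _ <| TopologicalSpace.ext_nhds fun a =>
    (nhds_eq a).trans (core.nhds_toTopologicalSpace a).symm
  have : IsCountablyGenerated (uniformity Y) :=
    inferInstanceAs (IsCountablyGenerated (⨅ k, 𝓟 (E k)))
  exact UniformSpace.metrizableSpace

theorem metrizableSpace_of_development [ParacompactSpace Y] [T2Space Y] {ι : Type*}
    (U : ℕ → ι → Set Y) (hUo : ∀ k i, IsOpen (U k i)) (hUc : ∀ k, ⋃ i, U k i = univ)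
    (hdev : ∀ x, ∀ O ∈ 𝓝 x, ∃ k, coverStar (U k) {x} ⊆ O) :
    TopologicalSpace.MetrizableSpace Y := by
  obtain ⟨W, hW, hWW, hWU⟩ := exists_seq_star_refinement U hUo hUc
  refine metrizableSpace_of_star_refining W (fun k x => (hW k x).1.mem_nhds (hW k x).2) hWW
    fun x O hO => ?_
  obtain ⟨k, hk⟩ := hdev x O hO
  obtain ⟨i, hi⟩ := hWU k x
  have hxW : W k x ⊆ coverStar (W k) (W k x) := subset_coverStar ⟨x, (hW k x).2, (hW k x).2⟩
  have hxU : x ∈ U k i := hi (hxW (hW k x).2)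
  exact ⟨k, (coverStar_mono (singleton_subset_iff.2 (hW k x).2)).trans <|
    hi.trans <| (subset_coverStar (inter_singleton_nonempty.2 hxU)).trans hk⟩

end Metrization

theorem ParacompactSpace.of_exists_locallyFinite_closed_refinement {X : Type v}
    [TopologicalSpace X]
    (h : ∀ (ι : Type v) (s : ι → Set X), (∀ i, IsOpen (s i)) → ⋃ i, s i = univ →
      ∃ F : ι → Set X, (∀ i, IsClosed (F i)) ∧ ⋃ i, F i = univ ∧ LocallyFinite F ∧
        ∀ i, F i ⊆ s i) :
    ParacompactSpace X := by
  refine ⟨fun ι s hso hsc => ?_⟩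
  obtain ⟨F, -, hFc, hFlf, hFs⟩ := h ι s hso hsc
  have hW : ∀ x, ∃ W, IsOpen W ∧ x ∈ W ∧ {i | (F i ∩ W).Nonempty}.Finite := fun x =>
    let ⟨t, ht, hfin⟩ := hFlf x
    ⟨interior t, isOpen_interior, mem_interior_iff_mem_nhds.2 ht,
      hfin.subset fun _ ⟨z, hzF, hzt⟩ => ⟨z, hzF, interior_subset hzt⟩⟩
  choose W hWo hxW hWfin using hW
  obtain ⟨G, hGcl, hGc, hGlf, hGW⟩ := h X W hWo (iUnion_eq_univ_iff.2 fun x => ⟨x, hxW x⟩)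
  -- Removing from `s i` the `G j` that miss `F i` keeps `F i` covered; each point has a
  -- neighbourhood meeting finitely many `G j`, and each `G j ⊆ W j` meets finitely many `F i`.
  refine ⟨ι, fun i => s i \ ⋃ (j) (_ : Disjoint (G j) (F i)), G j, fun i => ?_, ?_, ?_,
    fun i => ⟨i, sdiff_subset⟩⟩
  · refine (hso i).sdiff <|
      (hGlf.subset fun j => iUnion_subset fun _ => subset_rfl).isClosed_iUnion fun j => ?_
    exact isClosed_iUnion_of_finite fun _ => hGcl j
  · refine iUnion_eq_univ_iff.2 fun x => ?_
    obtain ⟨i, hi⟩ := iUnion_eq_univ_iff.1 hFc x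
    refine ⟨i, hFs i hi, ?_⟩
    simp only [mem_iUnion, not_exists]
    exact fun j hGF hxG => hGF.notMem_of_mem_left hxG hi
  · intro x
    obtain ⟨t, ht, hGfin⟩ := hGlf x
    refine ⟨t, ht, (hGfin.biUnion fun j _ => hWfin j).subset ?_⟩
    rintro i ⟨z, ⟨-, hzG⟩, hzt⟩
    obtain ⟨j, hj⟩ := iUnion_eq_univ_iff.1 hGc z
    have hGF : ¬Disjoint (G j) (F i) := fun hGF => hzG (mem_iUnion₂.2 ⟨j, hGF, hj⟩)
    obtain ⟨w, hwG, hwF⟩ := not_disjoint_iff.1 hGF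
    exact mem_iUnion₂.2 ⟨j, ⟨z, hj, hzt⟩, w, hwF, hGW j hwG⟩

section ProperMap

variable {M : Type*} {X : Type v} [TopologicalSpace M] [TopologicalSpace X] {f : M → X}

theorem IsProperMap.locallyFinite_image (hf : IsProperMap f) {ι : Type*} {C : ι → Set M}
    (hC : LocallyFinite C) : LocallyFinite fun i => f '' C i := by
  intro x
  choose N hN hNfin using hC
  obtain ⟨t, -, hxt⟩ := (hf.isCompact_preimage isCompact_singleton).elim_nhds_subcover
    (fun m => interior (N m)) fun m _ => interior_mem_nhds.2 (hN m)
  have hOpen : IsOpen (kernImage f (⋃ m ∈ t, interior (N m))) :=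
    isClosedMap_iff_kernImage.1 hf.isClosedMap (isOpen_biUnion fun _ _ => isOpen_interior)
  refine ⟨_, hOpen.mem_nhds fun m hm => hxt hm, ?_⟩
  refine (t.finite_toSet.biUnion fun m _ => hNfin m).subset ?_
  rintro i ⟨_, ⟨c, hc, rfl⟩, hfc⟩
  obtain ⟨m, hm, hcm⟩ := mem_iUnion₂.1 (hfc rfl)
  exact mem_iUnion₂.2 ⟨m, hm, c, hc, interior_subset hcm⟩

theorem IsProperMap.exists_locallyFinite_closed_refinement [ParacompactSpace M] [T2Space M]
    (hf : IsProperMap f) (hsurj : Function.Surjective f) {ι : Type*} (s : ι → Set X)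
    (hso : ∀ i, IsOpen (s i)) (hsc : ⋃ i, s i = univ) :
    ∃ F : ι → Set X, (∀ i, IsClosed (F i)) ∧ ⋃ i, F i = univ ∧ LocallyFinite F ∧
      ∀ i, F i ⊆ s i := by
  obtain ⟨V, hVo, hVc, hVlf, hVs⟩ := precise_refinement (fun i => f ⁻¹' s i)
    (fun i => (hso i).preimage hf.continuous) (by rw [← preimage_iUnion, hsc, preimage_univ])
  obtain ⟨v, hvc, -, hvV⟩ := exists_iUnion_eq_closure_subset hVo hVlf.point_finite hVc
  refine ⟨fun i => f '' closure (v i), fun i => hf.isClosedMap _ isClosed_closure,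
    iUnion_eq_univ_iff.2 fun x => ?_, hf.locallyFinite_image (hVlf.subset hvV),
    fun i => image_subset_iff.2 ((hvV i).trans (hVs i))⟩
  obtain ⟨m, rfl⟩ := hsurj x
  obtain ⟨i, hi⟩ := iUnion_eq_univ_iff.1 hvc m
  exact ⟨i, mem_image_of_mem f (subset_closure hi)⟩

theorem IsProperMap.paracompactSpace [ParacompactSpace M] [T2Space M] (hf : IsProperMap f)
    (hsurj : Function.Surjective f) : ParacompactSpace X :=
  .of_exists_locallyFinite_closed_refinement fun _ s hso hsc =>
    hf.exists_locallyFinite_closed_refinement hsurj s hso hsc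

end ProperMap

section MetricSource

variable {M X : Type*} [MetricSpace M] [TopologicalSpace X] {f : M → X}

theorem IsProperMap.exists_thickening_fiber_subset (hf : IsProperMap f) {x : X} {O : Set X}
    (hO : O ∈ 𝓝 x) : ∃ δ > 0, thickening δ (f ⁻¹' {x}) ⊆ f ⁻¹' O := by
  obtain ⟨δ, hδ, hsub⟩ :=
    (hf.isCompact_preimage isCompact_singleton).exists_thickening_subset_open
      (isOpen_interior.preimage hf.continuous) fun m (hm : f m = x) =>
        show f m ∈ interior O from hm ▸ mem_interior_iff_mem_nhds.2 hO
  exact ⟨δ, hδ, hsub.trans (preimage_mono interior_subset)⟩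

theorem IsProperMap.exists_coverStar_kernImage_thickening_subset (hf : IsProperMap f)
    (hsurj : Function.Surjective f) {x : X} {O : Set X} (hO : O ∈ 𝓝 x) :
    ∃ ε > 0, ∀ η ≤ ε,
      coverStar (fun y => kernImage f (thickening η (f ⁻¹' {y}))) {x} ⊆ O := by
  obtain ⟨δ, hδ, hδO⟩ := hf.exists_thickening_fiber_subset hO
  set V := kernImage f (thickening (δ / 2) (f ⁻¹' {x}))
  have hV : V ∈ 𝓝 x := (isClosedMap_iff_kernImage.1 hf.isClosedMap isOpen_thickening).mem_nhds
    fun m hm => self_subset_thickening (half_pos hδ) _ hm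
  obtain ⟨ε, hε, hεV⟩ := hf.exists_thickening_fiber_subset hV
  refine ⟨min ε (δ / 2), lt_min hε (half_pos hδ), fun η hη z hz => ?_⟩
  obtain ⟨y, hxy, hzy⟩ := mem_coverStar_singleton.1 hz
  -- The fibre over `y` comes `η`-close to the fibre over `x`, so `y ∈ V`.
  obtain ⟨m, rfl⟩ := hsurj x
  obtain ⟨w, hwy, hmw⟩ := mem_thickening_iff.1 (hxy rfl)
  have hyV : y ∈ V := hwy ▸ hεV (mem_thickening_iff.2
    ⟨m, rfl, (dist_comm w m).trans_lt (hmw.trans_le (hη.trans (min_le_left _ _)))⟩)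
  obtain ⟨p, rfl⟩ := hsurj z
  have hp : p ∈ thickening (η + δ / 2) (f ⁻¹' {f m}) :=
    thickening_thickening_subset _ _ _ <|
      thickening_subset_of_subset η (fun q hq => hyV hq) (hzy rfl)
  exact hδO (thickening_mono (by linarith [min_le_right ε (δ / 2)]) _ hp)

theorem IsProperMap.metrizableSpace_of_surjective [T2Space X] (hf : IsProperMap f)
    (hsurj : Function.Surjective f) : TopologicalSpace.MetrizableSpace X := by
  have := hf.paracompactSpace hsurj
  refine metrizableSpace_of_development
    (fun (k : ℕ) y => kernImage f (thickening (1 / ((k : ℝ) + 1)) (f ⁻¹' {y})))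
    (fun k y => isClosedMap_iff_kernImage.1 hf.isClosedMap isOpen_thickening)
    (fun k => iUnion_eq_univ_iff.2 fun x =>
      ⟨x, fun m hm => self_subset_thickening Nat.one_div_pos_of_nat _ hm⟩)
    fun x O hO => ?_
  obtain ⟨ε, hε, hεO⟩ := hf.exists_coverStar_kernImage_thickening_subset hsurj hO
  obtain ⟨k, hk⟩ := exists_nat_one_div_lt hε
  exact ⟨k, hεO _ hk.le⟩

end MetricSource

theorem isKSpace_iff_compactlyCoherentSpace {X : Type u} [TopologicalSpace X] :
    IsKSpace X ↔ CompactlyCoherentSpace X :=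
  ⟨.of_isClosed, fun _ F => (CompactlyCoherentSpace.isClosed_iff F).2⟩

theorem seqContinuous_of_forall_tendsto_exists {X Y : Type*} [TopologicalSpace X]
    [TopologicalSpace Y] [T2Space Y] {g : X → Y}
    (hg : ∀ (x : ℕ → X) (a : X), Tendsto x atTop (𝓝 a) →
      ∃ b, Tendsto (fun n => g (x n)) atTop (𝓝 b)) :
    SeqContinuous g := by
  intro x a hx
  -- Interleaving `x` with the constant sequence `a` forces the limit to be `g a`.
  set y : ℕ → X := fun n => if Even n then x (n / 2) else a
  have hy : Tendsto y atTop (𝓝 a) := by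
    refine tendsto_nhds.2 fun U hU ha => mem_of_superset
      (tendsto_nhds.1 (hx.comp (Nat.tendsto_div_const_atTop two_ne_zero)) U hU ha)
      fun n (hn : x (n / 2) ∈ U) => show y n ∈ U by dsimp only [y]; split_ifs <;> assumption
  obtain ⟨b, hb⟩ := hg y a hy
  have hodd : StrictMono fun n : ℕ => 2 * n + 1 := fun _ _ h => by dsimp only; omega
  have heven : StrictMono fun n : ℕ => 2 * n := fun _ _ h => by dsimp only; omega
  have hba : b = g a := tendsto_nhds_unique (hb.comp hodd.tendsto_atTop) <| by
    simp [y, Function.comp_def]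
  simpa [y, Function.comp_def, hba] using hb.comp heven.tendsto_atTop

theorem CsMetrizable.of_metrizableSpace {X : Type u} [TopologicalSpace X]
    [TopologicalSpace.MetrizableSpace X] : CsMetrizable X :=
  let _ := TopologicalSpace.metrizableSpaceMetric X
  ⟨X, inferInstance, id, id, continuous_id, Function.surjective_id, fun _ => rfl,
    fun _ a ha => ⟨a, ha⟩⟩

theorem KMetrizable.of_metrizableSpace {X : Type u} [TopologicalSpace X]
    [TopologicalSpace.MetrizableSpace X] : KMetrizable X :=
  let _ := TopologicalSpace.metrizableSpaceMetric X
  ⟨X, inferInstance, id, continuous_id, Function.surjective_id, fun _ hK => hK⟩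

theorem CsMetrizable.metrizableSpace {X : Type u} [TopologicalSpace X] [SequentialSpace X]
    (h : CsMetrizable X) : TopologicalSpace.MetrizableSpace X := by
  obtain ⟨M, _, f, s, hf, -, hfs, hs⟩ := h
  have hsc : Continuous s :=
    continuous_iff_seqContinuous.2 (seqContinuous_of_forall_tendsto_exists hs)
  exact (Function.LeftInverse.isEmbedding hfs hf hsc).metrizableSpace

theorem KMetrizable.metrizableSpace {X : Type u} [TopologicalSpace X] [T2Space X]
    (hk : IsKSpace X) (h : KMetrizable X) : TopologicalSpace.MetrizableSpace X := by
  obtain ⟨M, _, f, hf, hsurj, hK⟩ := h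
  have := isKSpace_iff_compactlyCoherentSpace.1 hk
  exact (isProperMap_iff_isCompact_preimage.2 ⟨hf, fun K => hK K⟩).metrizableSpace_of_surjective
    hsurj

/-- For a Hausdorff space `X` the following are equivalent:
(1) `X` is metrizable; (2) `X` is a sequential space and cs-metrizable;
(3) `X` is a k-space and k-metrizable. -/
theorem stmt_11 {X : Type u} [TopologicalSpace X] [T2Space X] :
    List.TFAE
      [ TopologicalSpace.MetrizableSpace X,
        SequentialSpace X ∧ CsMetrizable X,
        IsKSpace X ∧ KMetrizable X ] := by
  tfae_have 1 → 2 := fun _ => ⟨inferInstance, .of_metrizableSpace⟩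
  tfae_have 1 → 3 := fun _ =>
    ⟨isKSpace_iff_compactlyCoherentSpace.2 inferInstance, .of_metrizableSpace⟩
  tfae_have 2 → 1 := fun ⟨_, h⟩ => h.metrizableSpace
  tfae_have 3 → 1 := fun ⟨hk, h⟩ => h.metrizableSpace hk
  tfae_finish
end

section
/- Let f : X → Y be a continuous surjection between completely regular Hausdorff (Tychonoff) spaces admitting a section s : Y → X that preserves precompact sets. Then there is a function l assigning to each Radon probability measure μ on Y a Radon probability measure l(μ) on X such that the pushforward of l(μ) under f equals μ and l(μ)(cl(s(K))) = μ(K) for every compact set K ⊆ Y, where cl denotes closure in X. -/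
/-!
Embed `X` into a compact Hausdorff space `Z` (its Stone–Čech compactification) by `e`. The upper
integral `g ↦ inf {∫ u dμ | u ≥ g ∘ e ∘ s}` is sublinear on `C(Z, ℝ)`, so by Hahn–Banach it
dominates a linear functional, which is positive and, by Riesz–Markov–Kakutani, is integration
against a regular measure `ρ` on `Z` of mass `≤ 1` with `ρ C ≥ μ K` whenever the closed set `C`
contains `e (s K)`. Taking compacts `Kₙ` that exhaust `μ`, `ρ` is carried by the `σ`-compact set
`⋃ₙ e (cl s(Kₙ))`, on whose compact pieces `e` is a homeomorphism; hence `ρ` pulls back along `e`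
to a Radon measure `ν` on `X` with `ν (cl s(K)) ≥ μ K`. Inner regularity of `μ` upgrades this to
`ν (f⁻¹ B) ≥ μ B`, equal total masses force `f_* ν = μ`, and `cl s(K) ⊆ f⁻¹ K` gives equality.
-/

open Filter Topology Set MeasureTheory

universe u v

/-- A Radon probability measure: a Borel probability measure which is inner regular
with respect to compact sets on all Borel (measurable) sets. -/
def IsRadonProb {X : Type*} [TopologicalSpace X] [MeasurableSpace X]
    (μ : Measure X) : Prop :=
  IsProbabilityMeasure μ ∧
    ∀ B : Set X, MeasurableSet B →
      μ B = ⨆ (K : Set X) (_ : K ⊆ B) (_ : IsCompact K), μ K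

open Function
open scoped ENNReal CompactlySupported

namespace MeasureTheory

variable {Y : Type*} [MeasurableSpace Y]

/-- Only meaningful for bounded `h`; otherwise the infimum takes the junk value `0`. -/
noncomputable def upperIntegral (μ : Measure Y) (h : Y → ℝ) : ℝ :=
  sInf ((fun u => ∫ y, u y ∂μ) '' {u | Integrable u μ ∧ h ≤ u})

variable {μ : Measure Y} [IsFiniteMeasure μ]

lemma upperIntegral_le_integral {h u : Y → ℝ} (hh : BddBelow (range h)) (hu : Integrable u μ)
    (hhu : h ≤ u) : upperIntegral μ h ≤ ∫ y, u y ∂μ := by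
  obtain ⟨m, hm⟩ := hh
  refine csInf_le ⟨∫ _, m ∂μ, ?_⟩ ⟨u, ⟨hu, hhu⟩, rfl⟩
  rintro _ ⟨v, ⟨hv, hhv⟩, rfl⟩
  exact integral_mono (integrable_const m) hv fun y => (hm (mem_range_self y)).trans (hhv y)

lemma le_upperIntegral {h : Y → ℝ} (hh : BddAbove (range h)) {c : ℝ}
    (hc : ∀ u, Integrable u μ → h ≤ u → c ≤ ∫ y, u y ∂μ) : c ≤ upperIntegral μ h := by
  obtain ⟨M, hM⟩ := hh
  refine le_csInf ⟨_, fun _ => M, ⟨integrable_const M, fun y => hM (mem_range_self y)⟩, rfl⟩ ?_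
  rintro _ ⟨u, ⟨hu, hhu⟩, rfl⟩
  exact hc u hu hhu

lemma upperIntegral_add_le {h₁ h₂ : Y → ℝ} (hb : BddBelow (range (h₁ + h₂)))
    (ha₁ : BddAbove (range h₁)) (ha₂ : BddAbove (range h₂)) :
    upperIntegral μ (h₁ + h₂) ≤ upperIntegral μ h₁ + upperIntegral μ h₂ := by
  rw [← sub_le_iff_le_add']
  refine le_upperIntegral ha₂ fun u₂ hu₂ hh₂ => ?_
  rw [sub_le_comm]
  refine le_upperIntegral ha₁ fun u₁ hu₁ hh₁ => ?_
  rw [sub_le_iff_le_add, ← integral_add hu₁ hu₂]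
  exact upperIntegral_le_integral hb (hu₁.add hu₂) (add_le_add hh₁ hh₂)

lemma upperIntegral_smul_le {h : Y → ℝ} {c : ℝ} (hc : 0 < c) (hb : BddBelow (range (c • h)))
    (ha : BddAbove (range h)) : upperIntegral μ (c • h) ≤ c * upperIntegral μ h := by
  rw [← div_le_iff₀' hc]
  refine le_upperIntegral ha fun u hu hhu => ?_
  rw [div_le_iff₀' hc, ← integral_const_mul]
  exact upperIntegral_le_integral hb (hu.const_mul c) fun y =>
    mul_le_mul_of_nonneg_left (hhu y) hc.le

end MeasureTheory

theorem exists_linearMap_le_sublinear {E : Type*} [AddCommGroup E] [Module ℝ E] (N : E → ℝ)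
    (N_hom : ∀ c : ℝ, 0 < c → ∀ x, N (c • x) = c * N x) (N_add : ∀ x y, N (x + y) ≤ N x + N y) :
    ∃ Φ : E →ₗ[ℝ] ℝ, ∀ x, Φ x ≤ N x := by
  obtain ⟨Φ, -, hΦ⟩ := exists_extension_of_le_sublinear ⟨⊥, 0⟩ N N_hom N_add fun ⟨x, hx⟩ => by
    obtain rfl := (Submodule.mem_bot ℝ).1 hx
    have := N_hom 2 two_pos 0
    simp only [smul_zero] at this
    simp only [LinearMap.zero_apply, LinearPMap.mk_apply]
    linarith
  exact ⟨Φ, hΦ⟩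

theorem exists_linearMap_le_integral {Y E : Type*} [MeasurableSpace Y] [AddCommGroup E]
    [Module ℝ E] (μ : Measure Y) [IsFiniteMeasure μ] (T : E →ₗ[ℝ] Y → ℝ)
    (hT : ∀ x, BddBelow (range (T x)) ∧ BddAbove (range (T x))) :
    ∃ Φ : E →ₗ[ℝ] ℝ, ∀ x u, Integrable u μ → T x ≤ u → Φ x ≤ ∫ y, u y ∂μ := by
  set N : E → ℝ := fun x => upperIntegral μ (T x)
  have N_smul_le : ∀ c : ℝ, 0 < c → ∀ x, N (c • x) ≤ c * N x := fun c hc x => by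
    simpa only [N, map_smul] using
      upperIntegral_smul_le hc (by simpa only [map_smul] using (hT (c • x)).1) (hT x).2
  have N_smul : ∀ c : ℝ, 0 < c → ∀ x, N (c • x) = c * N x := fun c hc x => by
    refine le_antisymm (N_smul_le c hc x) ?_
    have := N_smul_le c⁻¹ (inv_pos.2 hc) (c • x)
    rwa [inv_smul_smul₀ hc.ne', le_inv_mul_iff₀ hc] at this
  have N_add : ∀ x y, N (x + y) ≤ N x + N y := fun x y => by
    simpa only [N, map_add] using
      upperIntegral_add_le (by simpa only [map_add] using (hT (x + y)).1) (hT x).2 (hT y).2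
  obtain ⟨Φ, hΦ⟩ := exists_linearMap_le_sublinear N N_smul N_add
  exact ⟨Φ, fun x u hu hxu => (hΦ x).trans (upperIntegral_le_integral (hT x).1 hu hxu)⟩

theorem exists_regular_measure_ge_of_mapsTo {Y Z : Type*} [MeasurableSpace Y]
    [TopologicalSpace Z] [CompactSpace Z] [T2Space Z] [MeasurableSpace Z] [BorelSpace Z]
    (μ : Measure Y) [IsFiniteMeasure μ] (w : Y → Z) :
    ∃ ρ : Measure Z, ρ.Regular ∧ ρ univ ≤ μ univ ∧
      ∀ ⦃A C⦄, MeasurableSet A → IsClosed C → MapsTo w A C → μ A ≤ ρ C := by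
  let T : C_c(Z, ℝ) →ₗ[ℝ] Y → ℝ :=
    { toFun g y := g (w y), map_add' _ _ := rfl, map_smul' _ _ := rfl }
  have hT : ∀ g, BddBelow (range (T g)) ∧ BddAbove (range (T g)) := fun g =>
    ⟨(isCompact_range g.continuous).bddBelow.mono (range_comp_subset_range w g),
      (isCompact_range g.continuous).bddAbove.mono (range_comp_subset_range w g)⟩
  obtain ⟨Φ, hΦ⟩ := exists_linearMap_le_integral μ T hT
  have measureReal_le : ∀ (g : C_c(Z, ℝ)) (A : Set Y), MeasurableSet A →
      (∀ y, A.indicator 1 y ≤ g (w y)) → μ.real A ≤ Φ g := by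
    intro g A hA hg
    have := hΦ (-g) (fun y => -A.indicator 1 y) ((integrable_const 1).indicator hA).neg
      fun y => neg_le_neg (hg y)
    rw [map_neg, integral_neg, integral_indicator_one hA] at this
    linarith
  let Λ : C_c(Z, ℝ) →ₚ[ℝ] ℝ := PositiveLinearMap.mk₀ Φ fun g hg => by
    simpa using measureReal_le g ∅ MeasurableSet.empty fun y => by simpa using hg (w y)
  refine ⟨RealRMK.rieszMeasure Λ, inferInstance, ?_, fun A C hA hC hAC => ?_⟩
  · let one : C_c(Z, ℝ) := ⟨1, .of_compactSpace 1⟩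
    have : Φ one ≤ μ.real univ := by simpa using hΦ one 1 (integrable_const 1) le_rfl
    calc RealRMK.rieszMeasure Λ univ ≤ ENNReal.ofReal (Λ one) :=
          RealRMK.rieszMeasure_le_of_eq_one Λ (fun _ => zero_le_one) isCompact_univ
            fun _ _ => rfl
      _ ≤ ENNReal.ofReal (μ.real univ) := ENNReal.ofReal_le_ofReal this
      _ = μ univ := ofReal_measureReal (measure_ne_top μ univ)
  · rw [C.measure_eq_iInf_isOpen]
    refine le_iInf₂ fun V hCV => le_iInf fun hV => ?_
    obtain ⟨g, hgC, hgc, hgV, hg01⟩ :=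
      exists_continuousMap_one_of_isCompact_subset_isOpen hC.isCompact hV hCV
    calc μ A = ENNReal.ofReal (μ.real A) := (ofReal_measureReal (measure_ne_top μ A)).symm
      _ ≤ ENNReal.ofReal (Λ ⟨g, hgc⟩) := by
          refine ENNReal.ofReal_le_ofReal (measureReal_le _ A hA fun y => ?_)
          refine indicator_apply_le' (fun hy => ?_) fun _ => (hg01 (w y)).1
          exact (hgC (hAC hy)).symm.le
      _ ≤ RealRMK.rieszMeasure Λ V :=
          RealRMK.le_rieszMeasure_tsupport_subset Λ (f := ⟨g, hgc⟩) (fun z => hg01 z) hgV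

lemma isRadonProb_iff {X : Type*} [TopologicalSpace X] [MeasurableSpace X] {μ : Measure X} :
    IsRadonProb μ ↔ IsProbabilityMeasure μ ∧ μ.InnerRegular := by
  refine ⟨fun h => ⟨h.1, ⟨fun B hB r hr => ?_⟩⟩, fun h => ⟨h.1, fun B hB => ?_⟩⟩
  · rw [h.2 B hB] at hr
    simpa only [lt_iSup_iff, exists_prop] using hr
  · have := h.2
    exact hB.measure_eq_iSup_isCompact μ

lemma exists_monotone_isCompact_iSup_measure_eq {X : Type*} [TopologicalSpace X]
    [MeasurableSpace X] (μ : Measure X) [IsFiniteMeasure μ] [μ.InnerRegular] :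
    ∃ K : ℕ → Set X, (∀ n, IsCompact (K n)) ∧ Monotone K ∧ ⨆ n, μ (K n) = μ univ := by
  choose L _ hLc hL using fun n : ℕ => MeasurableSet.univ.exists_isCompact_lt_add
    (measure_ne_top μ univ) (ENNReal.inv_ne_zero.2 (ENNReal.natCast_ne_top n))
  refine ⟨accumulate L, isCompact_accumulate hLc, monotone_accumulate,
    le_antisymm (iSup_le fun n => measure_mono (subset_univ _)) ?_⟩
  refine ENNReal.le_of_forall_pos_le_add fun ε hε _ => ?_
  obtain ⟨n, hn⟩ := ENNReal.exists_inv_nat_lt (ENNReal.coe_ne_zero.2 hε.ne')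
  calc μ univ ≤ μ (L n) + (n : ℝ≥0∞)⁻¹ := (hL n).le
    _ ≤ (⨆ n, μ (accumulate L n)) + ε :=
        add_le_add (le_iSup_of_le n (measure_mono subset_accumulate)) hn.le

lemma measure_image_eq_iUnion_image_inter {X Z : Type*} [MeasurableSpace Z] {e : X → Z}
    (hinj : Injective e) {D : ℕ → Set X} {ρ : Measure Z} (hρ : ρ (⋃ n, e '' D n)ᶜ = 0)
    (B : Set X) : ρ (e '' B) = ρ (⋃ n, e '' (B ∩ D n)) := by
  simp_rw [image_inter hinj, ← inter_iUnion]
  exact (measure_inter_conull hρ).symm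

section Comap

variable {X Z : Type*} [TopologicalSpace X] [MeasurableSpace X] [BorelSpace X]
  [TopologicalSpace Z] [T2Space Z] [MeasurableSpace Z] [BorelSpace Z] {e : X → Z}

lemma measurableSet_image_inter_of_isCompact (he : Continuous e) (hinj : Injective e)
    {B D : Set X} (hB : MeasurableSet B) (hD : IsCompact D) : MeasurableSet (e '' (B ∩ D)) := by
  have := isCompact_iff_compactSpace.mp hD
  have hemb : MeasurableEmbedding (e ∘ ((↑) : D → X)) :=
    ((he.comp continuous_subtype_val).isClosedEmbedding
      (hinj.comp Subtype.val_injective)).measurableEmbedding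
  rw [inter_comm, ← Subtype.image_preimage_coe, ← image_comp]
  exact hemb.measurableSet_image.2 (measurable_subtype_coe hB)

variable {D : ℕ → Set X} {ρ : Measure Z}

lemma nullMeasurableSet_image_of_measure_compl_eq_zero (he : Continuous e) (hinj : Injective e)
    (hD : ∀ n, IsCompact (D n)) (hρ : ρ (⋃ n, e '' D n)ᶜ = 0) {B : Set X}
    (hB : MeasurableSet B) : NullMeasurableSet (e '' B) ρ := by
  rw [← inter_union_sdiff (e '' B) (⋃ n, e '' D n), inter_iUnion]
  simp_rw [← image_inter hinj]
  exact (MeasurableSet.iUnion fun n =>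
    measurableSet_image_inter_of_isCompact he hinj hB (hD n)).nullMeasurableSet.union
      (.of_null (measure_mono_null (sdiff_subset_compl _ _) hρ))

lemma comap_apply_of_measure_compl_eq_zero (he : Continuous e) (hinj : Injective e)
    (hD : ∀ n, IsCompact (D n)) (hρ : ρ (⋃ n, e '' D n)ᶜ = 0) {B : Set X}
    (hB : MeasurableSet B) : ρ.comap e B = ρ (e '' B) :=
  Measure.comap_apply₀ e ρ hinj
    (fun _ => nullMeasurableSet_image_of_measure_compl_eq_zero he hinj hD hρ) hB.nullMeasurableSet

lemma innerRegular_comap_of_measure_compl_eq_zero (he : Continuous e) (hinj : Injective e)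
    (hD : ∀ n, IsCompact (D n)) (hmono : Monotone D) (hρ : ρ (⋃ n, e '' D n)ᶜ = 0)
    [ρ.InnerRegular] : (ρ.comap e).InnerRegular := by
  refine ⟨fun B hB r hr => ?_⟩
  rw [comap_apply_of_measure_compl_eq_zero he hinj hD hρ hB,
    measure_image_eq_iUnion_image_inter hinj hρ, Monotone.measure_iUnion, lt_iSup_iff] at hr
  swap
  · exact fun m n h => image_mono (inter_subset_inter_right B (hmono h))
  obtain ⟨n, hn⟩ := hr
  obtain ⟨C, hCsub, hC, hrC⟩ :=
    (measurableSet_image_inter_of_isCompact he hinj hB (hD n)).exists_lt_isCompact hn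
  refine ⟨D n ∩ e ⁻¹' C, ?_, (hD n).inter_right (hC.isClosed.preimage he), ?_⟩
  · rintro x ⟨-, hx⟩
    obtain ⟨x', ⟨hx'B, -⟩, hx'⟩ := hCsub hx
    rwa [← hinj hx']
  · refine hrC.trans_le (le_of_eq_of_le ?_ (Measure.le_comap_apply e ρ hinj
      (fun _ => nullMeasurableSet_image_of_measure_compl_eq_zero he hinj hD hρ) _))
    rw [image_inter_preimage, inter_eq_right.2 (hCsub.trans (image_mono inter_subset_right))]

end Comap

lemma closure_image_subset_preimage {X Y : Type*} [TopologicalSpace X] [TopologicalSpace Y]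
    {f : X → Y} (hf : Continuous f) {s : Y → X} (hsec : ∀ y, f (s y) = y) {K : Set Y}
    (hK : IsClosed K) : closure (s '' K) ⊆ f ⁻¹' K :=
  closure_minimal (image_subset_iff.2 fun y hy => by simpa [hsec] using hy) (hK.preimage hf)

lemma map_eq_of_le_measure_closure_image {X Y : Type*} [TopologicalSpace X] [TopologicalSpace Y]
    [T2Space Y] [MeasurableSpace X] [BorelSpace X] [MeasurableSpace Y] [BorelSpace Y]
    {f : X → Y} (hf : Continuous f) {s : Y → X} (hsec : ∀ y, f (s y) = y)
    {μ : Measure Y} [IsFiniteMeasure μ] [μ.InnerRegular] {ν : Measure X}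
    (hle : ∀ K, IsCompact K → μ K ≤ ν (closure (s '' K))) (huniv : ν univ ≤ μ univ) :
    ν.map f = μ := by
  have hμν : μ ≤ ν.map f := Measure.le_iff.2 fun B hB => by
    rw [Measure.map_apply hf.measurable hB, hB.measure_eq_iSup_isCompact μ]
    exact iSup₂_le fun K hKB => iSup_le fun hK => (hle K hK).trans
      (measure_mono ((closure_image_subset_preimage hf hsec hK.isClosed).trans (preimage_mono hKB)))
  refine (Measure.eq_of_le_of_measure_univ_eq hμν (le_antisymm (hμν univ) ?_)).symm
  rwa [Measure.map_apply hf.measurable .univ, preimage_univ]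

theorem exists_isRadonProb_lift {X Y Z : Type*} [TopologicalSpace X] [TopologicalSpace Y]
    [T2Space Y] [MeasurableSpace X] [BorelSpace X] [MeasurableSpace Y] [BorelSpace Y]
    [TopologicalSpace Z] [CompactSpace Z] [T2Space Z] [MeasurableSpace Z] [BorelSpace Z]
    {e : X → Z} (he : Continuous e) (hinj : Injective e)
    {f : X → Y} (hf : Continuous f) {s : Y → X} (hsec : ∀ y, f (s y) = y)
    (hs : ∀ K : Set Y, IsCompact K → IsCompact (closure (s '' K)))
    {μ : Measure Y} (hμ : IsRadonProb μ) :
    ∃ ν : Measure X, IsRadonProb ν ∧ ν.map f = μ ∧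
      ∀ K : Set Y, IsCompact K → ν (closure (s '' K)) = μ K := by
  obtain ⟨_, _⟩ := isRadonProb_iff.1 hμ
  obtain ⟨ρ, _, hρuniv, hρ⟩ := exists_regular_measure_ge_of_mapsTo μ (e ∘ s)
  have hρK : ∀ K, IsCompact K → μ K ≤ ρ (e '' closure (s '' K)) := fun K hK =>
    hρ hK.measurableSet ((hs K hK).image he).isClosed fun y hy =>
      mem_image_of_mem e (subset_closure (mem_image_of_mem s hy))
  obtain ⟨K, hKc, hKmono, hKsup⟩ := exists_monotone_isCompact_iSup_measure_eq μ
  set D : ℕ → Set X := fun n => closure (s '' K n)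
  have hD : ∀ n, IsCompact (D n) := fun n => hs _ (hKc n)
  have hρD : ρ (⋃ n, e '' D n)ᶜ = 0 := by
    have hmeas : MeasurableSet (⋃ n, e '' D n) :=
      .iUnion fun n => ((hD n).image he).isClosed.measurableSet
    rw [measure_compl hmeas (measure_ne_top ρ _), tsub_eq_zero_of_le]
    calc ρ univ ≤ ⨆ n, μ (K n) := hKsup ▸ hρuniv
      _ ≤ ρ (⋃ n, e '' D n) := iSup_le fun n =>
          (hρK _ (hKc n)).trans (measure_mono (subset_iUnion (fun n => e '' D n) n))
  set ν := ρ.comap e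
  have hν : ∀ B, MeasurableSet B → ν B = ρ (e '' B) := fun B hB =>
    comap_apply_of_measure_compl_eq_zero he hinj hD hρD hB
  have hνK : ∀ K, IsCompact K → μ K ≤ ν (closure (s '' K)) := fun K hK =>
    (hρK K hK).trans_eq (hν _ isClosed_closure.measurableSet).symm
  have hmap : ν.map f = μ := map_eq_of_le_measure_closure_image hf hsec hνK <| by
    calc ν univ = ρ (e '' univ) := hν _ .univ
      _ ≤ μ univ := (measure_mono (subset_univ _)).trans hρuniv
  have hν1 : IsProbabilityMeasure ν := ⟨by
    rw [← preimage_univ (f := f), ← Measure.map_apply hf.measurable .univ, hmap, measure_univ]⟩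
  have hνr : ν.InnerRegular := innerRegular_comap_of_measure_compl_eq_zero he hinj hD
    (fun m n h => closure_mono (image_mono (hKmono h))) hρD
  refine ⟨ν, isRadonProb_iff.2 ⟨hν1, hνr⟩, hmap, fun K hK => le_antisymm ?_ (hνK K hK)⟩
  calc ν (closure (s '' K)) ≤ ν (f ⁻¹' K) :=
        measure_mono (closure_image_subset_preimage hf hsec hK.isClosed)
    _ = μ K := by rw [← Measure.map_apply hf.measurable hK.measurableSet, hmap]

theorem stmt_15_general {X : Type u} {Y : Type v} [TopologicalSpace X] [TopologicalSpace Y]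
    [T2Space X] [T2Space Y] [CompletelyRegularSpace X]
    [MeasurableSpace X] [BorelSpace X] [MeasurableSpace Y] [BorelSpace Y]
    (f : X → Y) (hf : Continuous f)
    (s : Y → X) (hsec : ∀ y, f (s y) = y)
    (hs : ∀ K : Set Y, IsCompact K → IsCompact (closure (s '' K))) :
    ∃ l : Measure Y → Measure X,
      ∀ μ : Measure Y, IsRadonProb μ →
        IsRadonProb (l μ) ∧
        Measure.map f (l μ) = μ ∧
        ∀ K : Set Y, IsCompact K → (l μ) (closure (s '' K)) = μ K := by
  have : T35Space X := {}
  borelize (StoneCech X)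
  choose! l hl using fun μ (hμ : IsRadonProb μ) => exists_isRadonProb_lift continuous_stoneCechUnit
    injective_stoneCechUnit_of_t35Space hf hsec hs hμ
  exact ⟨l, hl⟩

/-- If a continuous surjection `f : X → Y` between Tychonoff spaces admits
a section `s` preserving precompact sets, then there is an assignment `l` of Radon
probability measures on `X` to Radon probability measures on `Y` such that
`f` pushes `l μ` forward to `μ` and `l μ (cl (s '' K)) = μ K` for every compact `K`. -/
theorem stmt_15 {X : Type u} {Y : Type v} [TopologicalSpace X] [TopologicalSpace Y]
    [T2Space X] [T2Space Y] [CompletelyRegularSpace X] [CompletelyRegularSpace Y]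
    [MeasurableSpace X] [BorelSpace X] [MeasurableSpace Y] [BorelSpace Y]
    (f : X → Y) (hf : Continuous f) (hsurj : Function.Surjective f)
    (s : Y → X) (hsec : ∀ y, f (s y) = y)
    (hs : ∀ K : Set Y, IsCompact K → IsCompact (closure (s '' K))) :
    ∃ l : Measure Y → Measure X,
      ∀ μ : Measure Y, IsRadonProb μ →
        IsRadonProb (l μ) ∧
        Measure.map f (l μ) = μ ∧
        ∀ K : Set Y, IsCompact K → (l μ) (closure (s '' K)) = μ K :=
  stmt_15_general f hf s hsec hs
end

section
/- Let f : X → Y be a subproper continuous surjection between completely regular Hausdorff (Tychonoff) spaces. If X has the weak Skorohod property, then Y has the weak Skorohod property. -/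
/-!
A Radon probability measure `ν` on `Y` lifts to a Radon probability measure `μ` on `X` with
`f_* μ = ν` and `ν K ≤ μ (closure (Z ∩ f⁻¹ K))` for every compact `K`. Given this, lifts of a
uniformly tight sequence are uniformly tight, so the Skorohod parametrisations `ξ` of `X` yield
those of `Y` as `f ∘ ξ (lift ν)`.

To build the lift, note that for each finite family `F` of compact sets there is a measurable
section `s` of `f` with values in `Z` such that `f (s y)` lies in every member of `F` containing
`y`; the push-forward `s_* ν` then gives mass at least `ν K` to `closure (Z ∩ f⁻¹ K)` for
`K ∈ F`. Limits of these measures along an ultrafilter refining `atTop` form a content, and its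
measure is the lift: it has total mass at most one, dominates `ν K` on `f⁻¹ K`, and is regular,
so inner regularity of `ν` forces `f_* μ = ν`.
-/

open Filter Topology Set MeasureTheory

universe u v

/-- A sequence of measures is uniformly tight if for every `ε > 0` there is a compact
set whose complement has measure `< ε` for all measures of the sequence. -/
def UniformlyTight {X : Type*} [TopologicalSpace X] [MeasurableSpace X]
    (μs : ℕ → Measure X) : Prop :=
  ∀ ε : ENNReal, 0 < ε → ∃ K : Set X, IsCompact K ∧ ∀ n, μs n Kᶜ < ε

/-- The weak Skorohod property: to each Radon probability measure `μ` one can assign a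
Borel function `ξ μ : [0,1] → X` (here modelled as a Borel function on `ℝ`, with Lebesgue
measure restricted to `[0,1]`) pushing Lebesgue measure on `[0,1]` to `μ`, so that every
uniformly tight sequence of Radon probability measures admits a subsequence whose
associated functions converge almost everywhere on `[0,1]`. -/
def WeakSkorohod (X : Type*) [TopologicalSpace X] [MeasurableSpace X] : Prop :=
  ∃ ξ : Measure X → ℝ → X,
    (∀ μ : Measure X, IsRadonProb μ →
      Measurable (ξ μ) ∧
      Measure.map (ξ μ) (volume.restrict (Set.Icc (0:ℝ) 1)) = μ) ∧
    (∀ μs : ℕ → Measure X, (∀ n, IsRadonProb (μs n)) → UniformlyTight μs →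
      ∃ (φ : ℕ → ℕ) (g : ℝ → X), StrictMono φ ∧
        ∀ᵐ t ∂(volume.restrict (Set.Icc (0:ℝ) 1)),
          Tendsto (fun k => ξ (μs (φ k)) t) atTop (𝓝 (g t)))

open scoped NNReal ENNReal

section LimitMeasure

variable {X : Type*} [TopologicalSpace X] [MeasurableSpace X] [BorelSpace X]

lemma exists_content_tendsto_of_ultrafilter {ι : Type*} (𝒰 : Ultrafilter ι)
    (m : ι → Measure X) [∀ i, IsProbabilityMeasure (m i)] :
    ∃ ρ : Content X, ∀ K : TopologicalSpace.Compacts X,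
      Tendsto (fun i => m i K) 𝒰 (𝓝 (ρ K)) := by
  set L : TopologicalSpace.Compacts X → ℝ≥0∞ := fun K => (𝒰.map fun i => m i K).lim
  have hL : ∀ K : TopologicalSpace.Compacts X, Tendsto (fun i => m i K) 𝒰 (𝓝 (L K)) :=
    fun K => (𝒰.map _).le_nhds_lim
  have hL_ne_top : ∀ K, L K ≠ ∞ := fun K =>
    ((le_of_tendsto' (hL K) fun _ => prob_le_one).trans_lt ENNReal.one_lt_top).ne
  refine ⟨⟨fun K => (L K).toNNReal, ?_, ?_, ?_⟩, fun K => ?_⟩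
  · intro K₁ K₂ h
    exact ENNReal.toNNReal_mono (hL_ne_top _)
      (le_of_tendsto_of_tendsto' (hL K₁) (hL K₂) fun _ => measure_mono h)
  · intro K₁ K₂ hd _ h₂
    rw [← ENNReal.toNNReal_add (hL_ne_top _) (hL_ne_top _)]
    congr 1
    refine tendsto_nhds_unique (hL _) ?_
    simp only [TopologicalSpace.Compacts.coe_sup, measure_union hd h₂.measurableSet]
    exact (hL K₁).add (hL K₂)
  · intro K₁ K₂
    rw [← ENNReal.toNNReal_add (hL_ne_top _) (hL_ne_top _)]
    refine ENNReal.toNNReal_mono (ENNReal.add_ne_top.2 ⟨hL_ne_top _, hL_ne_top _⟩)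
      (le_of_tendsto_of_tendsto' (hL _) ((hL K₁).add (hL K₂)) fun _ => ?_)
    simpa only [TopologicalSpace.Compacts.coe_sup] using measure_union_le _ _
  · simpa [ENNReal.coe_toNNReal (hL_ne_top K)] using hL K

lemma MeasureTheory.Content.regular_of_isFiniteMeasure [R1Space X] (ρ : Content X)
    [IsFiniteMeasure ρ.measure] : ρ.measure.Regular := by
  refine ⟨fun U hU r hr => ?_⟩
  rw [ρ.measure_apply hU.measurableSet, ρ.outerMeasure_of_isOpen U hU] at hr
  simp only [Content.innerContent, lt_iSup_iff] at hr
  obtain ⟨K, hKU, hr⟩ := hr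
  exact ⟨K, hKU, K.2, hr.trans_le
    ((ρ.le_outerMeasure_compacts K).trans (le_toMeasure_apply _ _ _))⟩

lemma exists_regular_measure_ge_of_ultrafilter [T2Space X] {ι : Type*} (𝒰 : Ultrafilter ι)
    (m : ι → Measure X) [∀ i, IsProbabilityMeasure (m i)] :
    ∃ μ : Measure X, μ univ ≤ 1 ∧ μ.Regular ∧
      ∀ K, IsCompact K → ∀ c, (∀ᶠ i in 𝒰, c ≤ m i K) → c ≤ μ K := by
  obtain ⟨ρ, hρ⟩ := exists_content_tendsto_of_ultrafilter 𝒰 m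
  have hρ_le_one : ∀ K, ρ K ≤ 1 := fun K => le_of_tendsto' (hρ K) fun _ => prob_le_one
  have huniv : ρ.measure univ ≤ 1 := by
    rw [ρ.measure_apply MeasurableSet.univ, ρ.outerMeasure_of_isOpen univ isOpen_univ]
    exact iSup₂_le fun K _ => hρ_le_one K
  have : IsFiniteMeasure ρ.measure := ⟨huniv.trans_lt ENNReal.one_lt_top⟩
  refine ⟨ρ.measure, huniv, ρ.regular_of_isFiniteMeasure, fun K hK c hc => ?_⟩
  calc c ≤ ρ ⟨K, hK⟩ := ge_of_tendsto (hρ ⟨K, hK⟩) hc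
    _ ≤ ρ.measure K := (ρ.le_outerMeasure_compacts _).trans
        (ρ.measure_apply hK.isClosed.measurableSet).ge

end LimitMeasure

lemma isRadonProb_of_regular {X : Type*} [TopologicalSpace X] [MeasurableSpace X]
    (μ : Measure X) [IsProbabilityMeasure μ] [μ.Regular] : IsRadonProb μ :=
  ⟨inferInstance, fun _ hB => hB.measure_eq_iSup_isCompact_of_ne_top (measure_ne_top _ _)⟩

lemma IsRadonProb.map_eq_of_le_measure_preimage {X Y : Type*} [MeasurableSpace X]
    [TopologicalSpace Y] [MeasurableSpace Y] {f : X → Y} (hf : Measurable f)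
    {μ : Measure X} {ν : Measure Y} (hν : IsRadonProb ν) (hμ : μ univ ≤ 1)
    (h : ∀ K, IsCompact K → ν K ≤ μ (f ⁻¹' K)) :
    IsProbabilityMeasure μ ∧ μ.map f = ν := by
  have : IsProbabilityMeasure ν := hν.1
  have hle : ν ≤ μ.map f := Measure.le_iff.2 fun B hB => by
    rw [Measure.map_apply hf hB, hν.2 B hB]
    exact iSup₂_le fun K hKB => iSup_le fun hK =>
      (h K hK).trans (measure_mono (preimage_mono hKB))
  have hμ_univ : μ univ = 1 :=
    le_antisymm hμ (by simpa [Measure.map_apply hf] using hle univ)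
  refine ⟨⟨hμ_univ⟩, (Measure.eq_of_le_of_measure_univ_eq hle ?_).symm⟩
  rw [Measure.map_apply hf MeasurableSet.univ, preimage_univ, hμ_univ, measure_univ]

lemma exists_measurable_section_mem_of_finset {X Y : Type*} [MeasurableSpace X]
    [MeasurableSpace Y] [Nonempty Y] {f : X → Y} {Z : Set X} (hZ : f '' Z = univ)
    (F : Finset (Set Y)) :
    ∃ s : Y → X, Measurable s ∧
      ∀ y, s y ∈ Z ∧ ∀ K ∈ F, MeasurableSet K → y ∈ K → f (s y) ∈ K := by
  classical
  choose lift hlift_mem hlift_eq using fun y => (hZ.symm ▸ mem_univ y : y ∈ f '' Z)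
  let F' := F.filter MeasurableSet
  -- The section factors through `τ`, which takes finitely many values; hence it is measurable.
  let τ : Y → (F' → Prop) := fun y K => y ∈ (K : Set Y)
  have hτ : Measurable τ := measurable_pi_lambda _ fun K =>
    measurableSet_setOfPred.1 (Finset.mem_filter.1 K.2).2
  have hτ_inv : ∀ y, τ (Function.invFun τ (τ y)) = τ y := fun y => Function.invFun_eq ⟨y, rfl⟩
  refine ⟨lift ∘ Function.invFun τ ∘ τ,
    (measurable_of_finite (lift ∘ Function.invFun τ)).comp hτ,
    fun y => ⟨hlift_mem _, fun K hKF hK hyK => ?_⟩⟩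
  have := congrFun (hτ_inv y) ⟨K, Finset.mem_filter.2 ⟨hKF, hK⟩⟩
  simp only [Function.comp, hlift_eq]
  exact (iff_of_eq this).2 hyK

lemma IsRadonProb.exists_lift {X Y : Type*} [TopologicalSpace X] [TopologicalSpace Y]
    [T2Space X] [T2Space Y] [MeasurableSpace X] [BorelSpace X] [MeasurableSpace Y] [BorelSpace Y]
    {f : X → Y} (hf : Continuous f) {Z : Set X} (hZ : f '' Z = univ)
    (hZK : ∀ K : Set Y, IsCompact K → IsCompact (closure (Z ∩ f ⁻¹' K)))
    {ν : Measure Y} (hν : IsRadonProb ν) :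
    ∃ μ : Measure X, IsRadonProb μ ∧ μ.map f = ν ∧
      ∀ K : Set Y, IsCompact K → ν K ≤ μ (closure (Z ∩ f ⁻¹' K)) := by
  have : IsProbabilityMeasure ν := hν.1
  have : Nonempty Y := nonempty_of_isProbabilityMeasure ν
  choose s hs_meas hs using fun F => exists_measurable_section_mem_of_finset hZ F
  have : ∀ F, IsProbabilityMeasure (ν.map (s F)) := fun F =>
    Measure.isProbabilityMeasure_map (hs_meas F).aemeasurable
  obtain ⟨μ, hμ_univ, hμ_reg, hμ⟩ :=
    exists_regular_measure_ge_of_ultrafilter (.of atTop) fun F => ν.map (s F)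
  have hμK : ∀ K : Set Y, IsCompact K → ν K ≤ μ (closure (Z ∩ f ⁻¹' K)) := by
    intro K hK
    have hK_mem : ∀ᶠ F in (atTop : Filter (Finset (Set Y))), K ∈ F :=
      (eventually_ge_atTop {K}).mono fun _ => Finset.singleton_subset_iff.1
    refine hμ _ (hZK K hK) _ (Ultrafilter.of_le _ (hK_mem.mono fun F hKF => ?_))
    rw [Measure.map_apply (hs_meas F) isClosed_closure.measurableSet]
    refine measure_mono fun y hy => subset_closure ⟨(hs F y).1, ?_⟩
    exact (hs F y).2 K hKF hK.isClosed.measurableSet hy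
  obtain ⟨hμ_prob, hμ_map⟩ := hν.map_eq_of_le_measure_preimage hf.measurable hμ_univ
    fun K hK => (hμK K hK).trans
      (measure_mono (closure_minimal inter_subset_right (hK.isClosed.preimage hf)))
  exact ⟨μ, isRadonProb_of_regular μ, hμ_map, hμK⟩

lemma UniformlyTight.of_forall_isCompact_exists_le {X Y : Type*} [TopologicalSpace X]
    [T2Space X] [MeasurableSpace X] [BorelSpace X] [TopologicalSpace Y] [MeasurableSpace Y]
    {μs : ℕ → Measure X} {νs : ℕ → Measure Y} [∀ n, IsProbabilityMeasure (μs n)]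
    [∀ n, IsProbabilityMeasure (νs n)] (hν : UniformlyTight νs)
    (h : ∀ K, IsCompact K → ∃ C, IsCompact C ∧ ∀ n, νs n K ≤ μs n C) :
    UniformlyTight μs := by
  intro ε hε
  obtain ⟨K, hK, hKε⟩ := hν ε hε
  obtain ⟨C, hC, hKC⟩ := h K hK
  refine ⟨C, hC, fun n => lt_of_le_of_lt ?_ (hKε n)⟩
  calc μs n Cᶜ ≤ 1 - νs n K :=
        prob_compl_le_one_sub_of_le_prob (hKC n) hC.isClosed.measurableSet
    _ ≤ νs n Kᶜ := tsub_le_iff_left.2 (measure_univ (μ := νs n) ▸ measure_univ_le_add_compl K)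

theorem stmt_16_general {X : Type u} {Y : Type v} [TopologicalSpace X] [TopologicalSpace Y]
    [T2Space X] [T2Space Y]
    [MeasurableSpace X] [BorelSpace X] [MeasurableSpace Y] [BorelSpace Y]
    (f : X → Y) (hf : Continuous f)
    (hsub : ∃ Z : Set X, f '' Z = univ ∧
      ∀ K : Set Y, IsCompact K → IsCompact (closure (Z ∩ f ⁻¹' K)))
    (hX : WeakSkorohod X) :
    WeakSkorohod Y := by
  obtain ⟨ξ, hξ_law, hξ_conv⟩ := hX
  obtain ⟨Z, hZ, hZK⟩ := hsub
  choose! lift hlift_radon hlift_map hlift_mass using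
    fun ν (hν : IsRadonProb ν) => hν.exists_lift hf hZ hZK
  refine ⟨fun ν => f ∘ ξ (lift ν), fun ν hν => ?_, fun νs hνs hνs_tight => ?_⟩
  · obtain ⟨hξ_meas, hξ_map⟩ := hξ_law _ (hlift_radon ν hν)
    refine ⟨hf.measurable.comp hξ_meas, ?_⟩
    rw [← Measure.map_map hf.measurable hξ_meas, hξ_map, hlift_map ν hν]
  · have := fun n => (hlift_radon _ (hνs n)).1
    have := fun n => (hνs n).1
    obtain ⟨φ, g, hφ, hg⟩ := hξ_conv (fun n => lift (νs n)) (fun n => hlift_radon _ (hνs n))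
      (hνs_tight.of_forall_isCompact_exists_le fun K hK =>
        ⟨_, hZK K hK, fun n => hlift_mass _ (hνs n) K hK⟩)
    exact ⟨φ, f ∘ g, hφ, hg.mono fun t ht => (hf.tendsto (g t)).comp ht⟩

/-- The weak Skorohod property is preserved by subproper maps between
Tychonoff spaces. -/
theorem stmt_16 {X : Type u} {Y : Type v} [TopologicalSpace X] [TopologicalSpace Y]
    [T2Space X] [T2Space Y] [CompletelyRegularSpace X] [CompletelyRegularSpace Y]
    [MeasurableSpace X] [BorelSpace X] [MeasurableSpace Y] [BorelSpace Y]
    (f : X → Y) (hf : Continuous f) (hsurj : Function.Surjective f)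
    (hsub : ∃ Z : Set X, f '' Z = univ ∧
      ∀ K : Set Y, IsCompact K → IsCompact (closure (Z ∩ f ⁻¹' K)))
    (hX : WeakSkorohod X) :
    WeakSkorohod Y :=
  stmt_16_general f hf hsub hX
end

section
/- Let X be a real normed space whose continuous dual space X* (with the dual norm) is separable. Then X endowed with its weak topology has a countable k-network. -/
/-!
Fix a dense sequence `(uₙ)` in `X*`. Weakly compact sets are norm bounded, and on a bounded set
every functional is a uniform limit of the `uₙ`; hence on balls the weak topology agrees with the
second countable topology induced by the `uₙ`. The traces of a countable basis of the latter on
the balls of integer radius then form a countable k-network.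
-/

open Filter Topology Set

universe u

/-- The weak topology on a real normed space `X`: the coarsest topology making every
continuous linear functional on `X` continuous. -/
def weakTopology (X : Type u) [NormedAddCommGroup X] [NormedSpace ℝ X] :
    TopologicalSpace X :=
  ⨅ φ : StrongDual ℝ X, TopologicalSpace.induced (⇑φ) inferInstance

open Metric Bornology TopologicalSpace

def IsKNetwork {X : Type*} (t : TopologicalSpace X) (𝒩 : Set (Set X)) : Prop :=
  ∀ U : Set X, IsOpen[t] U → ∀ K : Set X, @IsCompact X t K → K ⊆ U →
    ∃ 𝓕 ⊆ 𝒩, 𝓕.Finite ∧ K ⊆ ⋃₀ 𝓕 ∧ ⋃₀ 𝓕 ⊆ U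

/-- The k-network consists of the traces on the pieces `B i` of a countable basis of `t'`. -/
theorem exists_countable_isKNetwork_of_nhdsWithin_le {X ι : Type*} [Countable ι]
    {t t' : TopologicalSpace X} [@SecondCountableTopology X t'] (hle : t ≤ t')
    (B : ι → Set X) (hB : ∀ K, @IsCompact X t K → ∃ i, K ⊆ B i)
    (hnhds : ∀ i, ∀ x ∈ B i, @nhdsWithin X t' x (B i) ≤ @nhds X t x) :
    ∃ 𝒩 : Set (Set X), 𝒩.Countable ∧ IsKNetwork t 𝒩 := by
  have hbasis := @isBasis_countableBasis X t' _
  refine ⟨image2 (· ∩ ·) (@countableBasis X t' _) (range B),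
    (@countable_countableBasis X t' _).image2 (countable_range B) _, ?_⟩
  intro U hU K hK hKU
  obtain ⟨i, hKB⟩ := hB K hK
  let 𝒰 := {V ∈ @countableBasis X t' _ | V ∩ B i ⊆ U}
  have hcover : K ⊆ ⋃ V ∈ 𝒰, V := by
    intro x hx
    obtain ⟨W, hW, hWU⟩ := mem_nhdsWithin_iff_exists_mem_nhds_inter.1 <|
      hnhds i x (hKB hx) (@IsOpen.mem_nhds X t _ _ hU (hKU hx))
    obtain ⟨V, hV, hxV, hVW⟩ := hbasis.mem_nhds_iff.1 hW
    exact mem_biUnion ⟨hV, fun y hy => hWU ⟨hVW hy.1, hy.2⟩⟩ hxV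
  obtain ⟨𝒱, h𝒱𝒰, h𝒱, hK𝒱⟩ := @IsCompact.elim_finite_subcover_image X _ t _ _ _ hK
    (fun V hV => hle _ (hbasis.isOpen hV.1)) hcover
  refine ⟨(· ∩ B i) '' 𝒱, ?_, h𝒱.image _, ?_, ?_⟩
  · rintro _ ⟨V, hV, rfl⟩
    exact mem_image2_of_mem (h𝒱𝒰 hV).1 (mem_range_self i)
  · intro x hx
    obtain ⟨V, hV, hxV⟩ := mem_iUnion₂.1 (hK𝒱 hx)
    exact ⟨V ∩ B i, mem_image_of_mem _ hV, hxV, hKB hx⟩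
  · rintro x ⟨_, ⟨V, hV, rfl⟩, hx⟩
    exact (h𝒱𝒰 hV).2 hx

variable {X : Type u} [NormedAddCommGroup X] [NormedSpace ℝ X] {ι : Type*}

def functionalTopology (u : ι → StrongDual ℝ X) : TopologicalSpace X :=
  ⨅ i, TopologicalSpace.induced (u i) inferInstance

lemma weakTopology_eq_functionalTopology_id :
    weakTopology X = functionalTopology (id : StrongDual ℝ X → StrongDual ℝ X) :=
  rfl

lemma continuous_functionalTopology (u : ι → StrongDual ℝ X) (i : ι) :
    Continuous[functionalTopology u, _] (u i) :=
  continuous_iInf_dom continuous_induced_dom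

lemma weakTopology_le_functionalTopology (u : ι → StrongDual ℝ X) :
    weakTopology X ≤ functionalTopology u :=
  le_iInf fun i => iInf_le _ (u i)

lemma secondCountableTopology_functionalTopology [Countable ι] (u : ι → StrongDual ℝ X) :
    @SecondCountableTopology X (functionalTopology u) :=
  secondCountableTopology_iInf fun _ => secondCountableTopology_induced _ _ _

lemma nhds_functionalTopology (u : ι → StrongDual ℝ X) (x : X) :
    @nhds X (functionalTopology u) x = ⨅ i, comap (u i) (𝓝 (u i x)) :=
  nhds_iInf.trans (iInf_congr fun _ => nhds_induced _ _)

/-- On a bounded set every functional is a uniform limit of functionals of a dense family. -/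
lemma continuousOn_functionalTopology_of_isBounded {u : ι → StrongDual ℝ X}
    (hu : DenseRange u) (φ : StrongDual ℝ X) {s : Set X} (hs : IsBounded s) :
    @ContinuousOn X ℝ (functionalTopology u) _ φ s := by
  obtain ⟨R, hR, hsR⟩ := hs.exists_pos_norm_le
  refine @continuousOn_of_uniform_approx_of_continuousOn X ℝ (functionalTopology u) _ _ _ ?_
  intro V hV
  obtain ⟨ε, hε, hεV⟩ := mem_uniformity_dist.1 hV
  obtain ⟨i, hi⟩ := hu.exists_dist_lt φ (div_pos hε hR)
  refine ⟨u i, @Continuous.continuousOn _ _ (functionalTopology u) _ _ _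
    (continuous_functionalTopology u i), fun y hy => hεV ?_⟩
  calc dist (φ y) (u i y) = ‖(φ - u i) y‖ := by rw [dist_eq_norm, sub_apply]
    _ ≤ ‖φ - u i‖ * ‖y‖ := (φ - u i).le_opNorm y
    _ ≤ ‖φ - u i‖ * R := by gcongr; exact hsR y hy
    _ < ε / R * R := by rw [← dist_eq_norm]; gcongr
    _ = ε := div_mul_cancel₀ ε hR.ne'

lemma nhdsWithin_functionalTopology_le_nhds_weakTopology {u : ι → StrongDual ℝ X}
    (hu : DenseRange u) {s : Set X} (hs : IsBounded s) {x : X} (hx : x ∈ s) :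
    @nhdsWithin X (functionalTopology u) x s ≤ @nhds X (weakTopology X) x := by
  rw [weakTopology_eq_functionalTopology_id, nhds_functionalTopology]
  exact le_iInf fun φ => (continuousOn_functionalTopology_of_isBounded hu φ hs x hx).le_comap

/-- A weakly compact set is weakly bounded, hence bounded by the uniform boundedness principle
applied to its image in the bidual. -/
lemma isBounded_of_isCompact_weakTopology {K : Set X} (hK : @IsCompact X (weakTopology X) K) :
    IsBounded K := by
  have hweak : ∀ φ : StrongDual ℝ X, ∃ C, ∀ x : K,
      ‖NormedSpace.inclusionInDoubleDual ℝ X x φ‖ ≤ C := fun φ => by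
    have hφK := @IsCompact.image X ℝ (weakTopology X) _ _ _ hK (continuous_functionalTopology id φ)
    obtain ⟨C, hC⟩ := hφK.isBounded.exists_norm_le
    exact ⟨C, fun x => hC _ (mem_image_of_mem _ x.2)⟩
  obtain ⟨C, hC⟩ := banach_steinhaus hweak
  refine isBounded_iff_forall_norm_le.2 ⟨C, fun x hx => ?_⟩
  rw [← (NormedSpace.inclusionInDoubleDualLi ℝ (E := X)).norm_map x]
  exact hC ⟨x, hx⟩

/-- If the continuous dual of a real normed space `X` is separable, then
`X` with the weak topology has a countable k-network. -/
theorem stmt_17 {X : Type u} [NormedAddCommGroup X] [NormedSpace ℝ X]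
    [TopologicalSpace.SeparableSpace (StrongDual ℝ X)] :
    ∃ 𝒩 : Set (Set X), 𝒩.Countable ∧
      ∀ U : Set X, IsOpen[weakTopology X] U →
        ∀ K : Set X, @IsCompact X (weakTopology X) K → K ⊆ U →
          ∃ 𝓕 ⊆ 𝒩, 𝓕.Finite ∧ K ⊆ ⋃₀ 𝓕 ∧ ⋃₀ 𝓕 ⊆ U := by
  let u := denseSeq (StrongDual ℝ X)
  have hu : DenseRange u := denseRange_denseSeq _
  have := secondCountableTopology_functionalTopology u
  refine exists_countable_isKNetwork_of_nhdsWithin_le (weakTopology_le_functionalTopology u)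
    (fun m : ℕ => closedBall (0 : X) m) (fun K hK => ?_)
    (fun m x hx => nhdsWithin_functionalTopology_le_nhds_weakTopology hu isBounded_closedBall hx)
  obtain ⟨r, hr⟩ := (isBounded_of_isCompact_weakTopology hK).subset_closedBall 0
  obtain ⟨m, hm⟩ := exists_nat_ge r
  exact ⟨m, hr.trans (closedBall_subset_closedBall hm)⟩
end
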